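/- arXiv:math/0407127 — 5 statements merged into one kernel-verified Lean document; each statement's English description precedes it below -/
import Mathlib

section
/- Suppose ρ : L^∞(Ω,𝓕,P) → ℝ satisfies monotonicity (X ≤ Y P-a.s. implies ρ(−X) ≤ ρ(−Y)), convexity (ρ(tX+(1−t)Y) ≤ tρ(X)+(1−t)ρ(Y) for all t ∈ [0,1]) and continuity from above (X_n ↓ X P-a.s. implies ρ(X_n) ↑ ρ(X)). Then the Neyman–Pearson problem at level v has a solution: there exists X* ∈ L^∞ with 0 ≤ X* ≤ K P-a.s. and E[φX*] ≥ v such that ρ(−X*) ≤ ρ(−X) for every X ∈ L^∞ with 0 ≤ X ≤ K P-a.s. and E[φX] ≥ v. -/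
open MeasureTheory Filter Topology Set

/-- The probability space `(Ω, 𝓕, P)` is atomless. -/
def Atomless {Ω : Type*} [MeasurableSpace Ω] (P : Measure Ω) : Prop :=
  ∀ A : Set Ω, MeasurableSet A → 0 < P A →
    ∃ B : Set Ω, MeasurableSet B ∧ B ⊆ A ∧ 0 < P B ∧ P B < P A

/-- Monotonicity of the risk measure: `X ≤ Y` P-a.s. implies `ρ(−X) ≤ ρ(−Y)`. -/
def RMono {Ω : Type*} [MeasurableSpace Ω] (P : Measure Ω) (ρ : (Ω → ℝ) → ℝ) : Prop :=
  ∀ X Y : Ω → ℝ, MemLp X ⊤ P → MemLp Y ⊤ P →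
    (∀ᵐ ω ∂P, X ω ≤ Y ω) → ρ (fun ω => -X ω) ≤ ρ (fun ω => -Y ω)

/-- Convexity of the risk measure. -/
def RConvex {Ω : Type*} [MeasurableSpace Ω] (P : Measure Ω) (ρ : (Ω → ℝ) → ℝ) : Prop :=
  ∀ X Y : Ω → ℝ, MemLp X ⊤ P → MemLp Y ⊤ P → ∀ t : ℝ, 0 ≤ t → t ≤ 1 →
    ρ (fun ω => t * X ω + (1 - t) * Y ω) ≤ t * ρ X + (1 - t) * ρ Y

/-- Continuity from above: `Xₙ ↓ X` P-a.s. implies `ρ(Xₙ) ↑ ρ(X)`. -/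
def RContFromAbove {Ω : Type*} [MeasurableSpace Ω] (P : Measure Ω) (ρ : (Ω → ℝ) → ℝ) : Prop :=
  ∀ (X : ℕ → Ω → ℝ) (X₀ : Ω → ℝ), (∀ n, MemLp (X n) ⊤ P) → MemLp X₀ ⊤ P →
    (∀ᵐ ω ∂P, Antitone fun n => X n ω) →
    (∀ᵐ ω ∂P, Tendsto (fun n => X n ω) atTop (𝓝 (X₀ ω))) →
    Monotone (fun n => ρ (X n)) ∧ Tendsto (fun n => ρ (X n)) atTop (𝓝 (ρ X₀))

/-- Feasibility for the Neyman–Pearson problem at level `v`: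
`X ∈ L^∞`, `0 ≤ X ≤ K` P-a.s. and `E[φX] ≥ v`. -/
def Feasible {Ω : Type*} [MeasurableSpace Ω] (P : Measure Ω) (φ : Ω → ℝ) (K v : ℝ)
    (X : Ω → ℝ) : Prop :=
  MemLp X ⊤ P ∧ (∀ᵐ ω ∂P, 0 ≤ X ω ∧ X ω ≤ K) ∧ v ≤ ∫ ω, φ ω * X ω ∂P

/-- A solution of the Neyman–Pearson problem for `ρ` at level `v`. -/
def IsNPSolution {Ω : Type*} [MeasurableSpace Ω] (P : Measure Ω) (ρ : (Ω → ℝ) → ℝ)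
    (φ : Ω → ℝ) (K v : ℝ) (X : Ω → ℝ) : Prop :=
  Feasible P φ K v X ∧
    ∀ Y : Ω → ℝ, Feasible P φ K v Y → ρ (fun ω => -X ω) ≤ ρ (fun ω => -Y ω)


/-!
Let `m` be the infimum of the problem. The sets of feasible `X` with `ρ(-X) ≤ m + 1/(n+1)` are
nonempty, convex, bounded and decreasing; seen in the Hilbert space `L²(P)`, elements of almost
minimal norm in them form a Cauchy sequence by the parallelogram law. A subsequence converges
a.e. to the `L²`-limit `X*`. Feasibility passes to the limit by dominated convergence, and
continuity from above, applied to the increasing tail infima of the subsequence, gives the Fatou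
bound `ρ(-X*) ≤ m`.
-/

theorem exists_cauchySeq_mem_of_antitone_convex {E : Type*} [NormedAddCommGroup E]
    [InnerProductSpace ℝ E] {C : ℕ → Set E} (hC : Antitone C) (hne : ∀ n, (C n).Nonempty)
    (hconv : ∀ n, Convex ℝ (C n)) {R : ℝ} (hR : ∀ x ∈ C 0, ‖x‖ ≤ R) :
    ∃ x : ℕ → E, (∀ n, x n ∈ C n) ∧ CauchySeq x := by
  set d : ℕ → ℝ := fun n => sInf ((‖·‖ ^ 2) '' C n)
  have hbdd : ∀ n, BddBelow ((‖·‖ ^ 2) '' C n) :=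
    fun n => ⟨0, by rintro _ ⟨x, -, rfl⟩; positivity⟩
  have hd_le : ∀ n, ∀ x ∈ C n, d n ≤ ‖x‖ ^ 2 := fun n x hx => csInf_le (hbdd n) ⟨x, hx, rfl⟩
  have hd_mono : Monotone d := fun n m h =>
    csInf_le_csInf (hbdd n) ((hne m).image _) (image_mono (hC h))
  have hd_bdd : BddAbove (range d) := by
    refine ⟨R ^ 2, ?_⟩
    rintro _ ⟨n, rfl⟩
    obtain ⟨x, hx⟩ := hne n
    exact (hd_le n x hx).trans (pow_le_pow_left₀ (norm_nonneg x) (hR x (hC n.zero_le hx)) 2)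
  set D := ⨆ n, d n
  have hd_tendsto : Tendsto d atTop (𝓝 D) := tendsto_atTop_ciSup hd_mono hd_bdd
  have hx : ∀ n, ∃ x ∈ C n, ‖x‖ ^ 2 < d n + 1 / (n + 1) := fun n => by
    obtain ⟨_, ⟨x, hx, rfl⟩, hlt⟩ :=
      exists_lt_of_csInf_lt ((hne n).image _) (lt_add_of_pos_right (d n) (Nat.one_div_pos_of_nat))
    exact ⟨x, hx, hlt⟩
  choose x hxC hxd using hx
  refine ⟨x, hxC, cauchySeq_of_le_tendsto_0 (fun N => √(4 * (D - d N + 1 / (N + 1)))) ?_ ?_⟩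
  · intro n m N hn hm
    rw [dist_eq_norm]
    refine Real.le_sqrt_of_sq_le ?_
    have hsmall : ∀ k, N ≤ k → ‖x k‖ ^ 2 ≤ D + 1 / (N + 1) := fun k hk => by
      have h1 : 1 / ((k : ℝ) + 1) ≤ 1 / (N + 1) := by gcongr
      linarith [hxd k, le_ciSup hd_bdd k]
    have hmid : 4 * d N ≤ ‖x n + x m‖ ^ 2 := by
      have := hd_le N _ (hconv N (hC hn (hxC n)) (hC hm (hxC m)) (by norm_num) (by norm_num)
        (add_halves 1))
      rw [← smul_add, norm_smul, mul_pow] at this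
      norm_num at this
      linarith
    linarith [parallelogram_law_with_norm ℝ (x n) (x m), hsmall n hn, hsmall m hm]
  · have : Tendsto (fun N : ℕ => 4 * (D - d N + 1 / (N + 1))) atTop (𝓝 (4 * (D - D + 0))) :=
      ((tendsto_const_nhds.sub hd_tendsto).add tendsto_one_div_add_atTop_nhds_zero_nat).const_mul 4
    simpa using this.sqrt

theorem tendsto_iInf_nat_add_of_tendsto {u : ℕ → ℝ} {l : ℝ} (hb : BddBelow (range u))
    (hu : Tendsto u atTop (𝓝 l)) : Tendsto (fun j => ⨅ i, u (j + i)) atTop (𝓝 l) := by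
  have hbj : ∀ j, BddBelow (range fun i => u (j + i)) :=
    fun j => hb.mono (range_subset_iff.2 fun i => mem_range_self _)
  refine tendsto_order.2 ⟨fun a ha => ?_, fun a ha => ?_⟩
  · obtain ⟨b, hab, hbl⟩ := exists_between ha
    obtain ⟨N, hN⟩ := eventually_atTop.1 (hu.eventually (lt_mem_nhds hbl))
    refine eventually_atTop.2 ⟨N, fun j hj => hab.trans_le (le_ciInf fun i => (hN _ ?_).le)⟩
    omega
  · refine (hu.eventually (gt_mem_nhds ha)).mono fun j hj => (ciInf_le (hbj j) 0).trans_lt ?_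
    simpa using hj

namespace RContFromAbove

variable {Ω : Type*} [MeasurableSpace Ω] {P : Measure Ω} {ρ : (Ω → ℝ) → ℝ}

theorem congr_ae (hcont : RContFromAbove P ρ) {U V : Ω → ℝ} (hU : MemLp U ⊤ P)
    (hV : MemLp V ⊤ P) (h : U =ᵐ[P] V) : ρ U = ρ V :=
  tendsto_nhds_unique tendsto_const_nhds
    (hcont (fun _ => U) V (fun _ => hU) hV (ae_of_all _ fun _ => antitone_const)
      (h.mono fun _ hω => hω ▸ tendsto_const_nhds)).2

theorem le_of_tendsto_ae (hcont : RContFromAbove P ρ) (hmono : RMono P ρ)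
    {Y : ℕ → Ω → ℝ} {X : Ω → ℝ} {C : ℝ} (hY : ∀ k, MemLp (Y k) ⊤ P) (hX : MemLp X ⊤ P)
    (hYC : ∀ᵐ ω ∂P, ∀ k, |Y k ω| ≤ C)
    (hYX : ∀ᵐ ω ∂P, Tendsto (fun k => Y k ω) atTop (𝓝 (X ω)))
    {c : ℕ → ℝ} {c₀ : ℝ} (hc : Tendsto c atTop (𝓝 c₀)) (hYc : ∀ k, ρ (fun ω => -Y k ω) ≤ c k) :
    ρ (fun ω => -X ω) ≤ c₀ := by
  set T : ℕ → Ω → ℝ := fun j ω => ⨅ i, Y (j + i) ω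
  have hbdd₀ : ∀ᵐ ω ∂P, BddBelow (range fun k => Y k ω) := by
    filter_upwards [hYC] with ω h using ⟨-C, by rintro _ ⟨k, rfl⟩; linarith [abs_le.1 (h k)]⟩
  have hbdd : ∀ᵐ ω ∂P, ∀ j, BddBelow (range fun i => Y (j + i) ω) := by
    filter_upwards [hbdd₀] with ω h j using h.mono (range_subset_iff.2 fun i => mem_range_self _)
  have hTY : ∀ j, ∀ᵐ ω ∂P, T j ω ≤ Y j ω := fun j => by
    filter_upwards [hbdd] with ω h using by simpa using ciInf_le (h j) 0
  have hT : ∀ j, MemLp (T j) ⊤ P := by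
    intro j
    have hTm : AEMeasurable (T j) P := AEMeasurable.iInf fun i => (hY (j + i)).1.aemeasurable
    refine memLp_top_of_bound hTm.aestronglyMeasurable C ?_
    filter_upwards [hYC, hTY j] with ω h hj
    exact abs_le.2 ⟨le_ciInf fun i => (abs_le.1 (h (j + i))).1, hj.trans (abs_le.1 (h j)).2⟩
  have hmono_T : ∀ᵐ ω ∂P, Monotone fun j => T j ω := by
    filter_upwards [hbdd] with ω h
    refine monotone_nat_of_le_succ fun j => le_ciInf fun i => ?_
    rw [add_right_comm]; exact ciInf_le (h j) (i + 1)
  have hTX : ∀ᵐ ω ∂P, Tendsto (fun j => T j ω) atTop (𝓝 (X ω)) := by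
    filter_upwards [hbdd₀, hYX] with ω h hω
    exact tendsto_iInf_nat_add_of_tendsto (u := fun k => Y k ω) h hω
  have hlim := hcont (fun j ω => -T j ω) (fun ω => -X ω) (fun j => (hT j).neg) hX.neg
    (hmono_T.mono fun ω h _ _ hab => neg_le_neg (h hab)) (hTX.mono fun ω h => h.neg)
  exact le_of_tendsto_of_tendsto' hlim.2 hc fun j =>
    (hmono _ _ (hT j) (hY j) (hTY j)).trans (hYc j)

end RContFromAbove

section Feasible

variable {Ω : Type*} [MeasurableSpace Ω] {P : Measure Ω} {φ : Ω → ℝ} {K v : ℝ} {X Y : Ω → ℝ}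

theorem Feasible.congr_ae (hX : Feasible P φ K v X) (h : X =ᵐ[P] Y) : Feasible P φ K v Y := by
  refine ⟨hX.1.ae_eq h, ?_, hX.2.2.trans_eq (integral_congr_ae ?_)⟩
  · filter_upwards [hX.2.1, h] with ω hω e
    rwa [← e]
  · filter_upwards [h] with ω e
    rw [e]

theorem Feasible.abs_le (hX : Feasible P φ K v X) : ∀ᵐ ω ∂P, |X ω| ≤ K :=
  hX.2.1.mono fun _ h => (abs_of_nonneg h.1).trans_le h.2

theorem feasible_const (hφ1 : ∫ ω, φ ω ∂P = 1) (hv : v ∈ Icc 0 K) :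
    Feasible P φ K v fun _ => K := by
  refine ⟨memLp_top_const K, ae_of_all _ fun _ => ⟨hv.1.trans hv.2, le_rfl⟩, ?_⟩
  rw [integral_mul_const, hφ1, one_mul]
  exact hv.2

theorem Feasible.convex_comb (hφ : Integrable φ P) (hX : Feasible P φ K v X)
    (hY : Feasible P φ K v Y) {t : ℝ} (ht₀ : 0 ≤ t) (ht₁ : t ≤ 1) :
    Feasible P φ K v fun ω => t * X ω + (1 - t) * Y ω := by
  refine ⟨(hX.1.const_mul t).add (hY.1.const_mul (1 - t)), ?_, ?_⟩
  · filter_upwards [hX.2.1, hY.2.1] with ω hXω hYω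
    constructor <;> nlinarith
  · have hφX : Integrable (fun ω => t * (φ ω * X ω)) P := (hφ.mul_of_top_left hX.1).const_mul t
    have hφY : Integrable (fun ω => (1 - t) * (φ ω * Y ω)) P :=
      (hφ.mul_of_top_left hY.1).const_mul (1 - t)
    calc v = t * v + (1 - t) * v := by ring
      _ ≤ t * ∫ ω, φ ω * X ω ∂P + (1 - t) * ∫ ω, φ ω * Y ω ∂P :=
        add_le_add (mul_le_mul_of_nonneg_left hX.2.2 ht₀)
          (mul_le_mul_of_nonneg_left hY.2.2 (sub_nonneg.2 ht₁))
      _ = ∫ ω, φ ω * (t * X ω + (1 - t) * Y ω) ∂P := by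
        rw [← integral_const_mul, ← integral_const_mul, ← integral_add hφX hφY]
        exact integral_congr_ae (ae_of_all _ fun ω => by ring)

theorem Feasible.of_tendsto_ae (hφ : Integrable φ P) {Y : ℕ → Ω → ℝ}
    (hY : ∀ k, Feasible P φ K v (Y k)) (hX : AEStronglyMeasurable X P)
    (hYX : ∀ᵐ ω ∂P, Tendsto (fun k => Y k ω) atTop (𝓝 (X ω))) : Feasible P φ K v X := by
  have hbd : ∀ᵐ ω ∂P, 0 ≤ X ω ∧ X ω ≤ K := by
    filter_upwards [ae_all_iff.2 fun k => (hY k).2.1, hYX] with ω h hω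
    exact ⟨ge_of_tendsto' hω fun k => (h k).1, le_of_tendsto' hω fun k => (h k).2⟩
  have hint : Tendsto (fun k => ∫ ω, φ ω * Y k ω ∂P) atTop (𝓝 (∫ ω, φ ω * X ω ∂P)) := by
    refine tendsto_integral_of_dominated_convergence (fun ω => |φ ω| * K)
      (fun k => (hφ.mul_of_top_left (hY k).1).1) (hφ.abs.mul_const K) (fun k => ?_) ?_
    · filter_upwards [(hY k).abs_le] with ω h
      rw [Real.norm_eq_abs, abs_mul]
      exact mul_le_mul_of_nonneg_left h (abs_nonneg _)
    · filter_upwards [hYX] with ω h using h.const_mul (φ ω)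
  refine ⟨memLp_top_of_bound hX K ?_, hbd, ge_of_tendsto' hint fun k => (hY k).2.2⟩
  filter_upwards [hbd] with ω h
  exact (abs_of_nonneg h.1).trans_le h.2

end Feasible

section Sublevel

variable {Ω : Type*} [MeasurableSpace Ω] {P : Measure Ω} {ρ : (Ω → ℝ) → ℝ} {φ : Ω → ℝ}
  {K v c : ℝ}

def feasibleSublevel (P : Measure Ω) (ρ : (Ω → ℝ) → ℝ) (φ : Ω → ℝ) (K v c : ℝ) :
    Set (Lp ℝ 2 P) :=
  {f | Feasible P φ K v f ∧ ρ (fun ω => -f ω) ≤ c}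

theorem feasibleSublevel_mono : Monotone (feasibleSublevel P ρ φ K v) :=
  fun _ _ h _ hf => ⟨hf.1, hf.2.trans h⟩

theorem convex_feasibleSublevel (hφ : Integrable φ P) (hcont : RContFromAbove P ρ)
    (hconv : RConvex P ρ) : Convex ℝ (feasibleSublevel P ρ φ K v c) := by
  intro f hf g hg a b ha hb hab
  obtain rfl : b = 1 - a := by linarith
  have hcomb : ⇑(a • f + (1 - a) • g) =ᵐ[P] fun ω => a * f ω + (1 - a) * g ω := by
    filter_upwards [Lp.coeFn_add (a • f) ((1 - a) • g), Lp.coeFn_smul a f,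
      Lp.coeFn_smul (1 - a) g] with ω h₁ h₂ h₃
    rw [h₁, Pi.add_apply, h₂, h₃, Pi.smul_apply, Pi.smul_apply, smul_eq_mul, smul_eq_mul]
  have hfeas := (hf.1.convex_comb hφ hg.1 ha (by linarith)).congr_ae hcomb.symm
  refine ⟨hfeas, ?_⟩
  calc ρ (fun ω => -(a • f + (1 - a) • g) ω)
      = ρ (fun ω => a * -f ω + (1 - a) * -g ω) :=
        hcont.congr_ae hfeas.1.neg ((hf.1.1.neg.const_mul a).add (hg.1.1.neg.const_mul _))
          (hcomb.mono fun ω h => by simp only [h]; ring)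
    _ ≤ a * ρ (fun ω => -f ω) + (1 - a) * ρ (fun ω => -g ω) :=
        hconv _ _ hf.1.1.neg hg.1.1.neg a ha (by linarith)
    _ ≤ a * c + (1 - a) * c := add_le_add (mul_le_mul_of_nonneg_left hf.2 ha)
        (mul_le_mul_of_nonneg_left hg.2 hb)
    _ = c := by ring

theorem feasibleSublevel_nonempty [IsFiniteMeasure P] (hcont : RContFromAbove P ρ)
    {X : Ω → ℝ} (hX : Feasible P φ K v X) (hc : ρ (fun ω => -X ω) ≤ c) :
    (feasibleSublevel P ρ φ K v c).Nonempty := by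
  have hX₂ : MemLp X 2 P := hX.1.mono_exponent le_top
  have hfeas := hX.congr_ae hX₂.coeFn_toLp.symm
  refine ⟨hX₂.toLp X, hfeas, le_of_eq_of_le ?_ hc⟩
  exact hcont.congr_ae hfeas.1.neg hX.1.neg (hX₂.coeFn_toLp.mono fun ω h => by simp only [h])

theorem norm_le_of_mem_feasibleSublevel [IsProbabilityMeasure P] (hK : 0 ≤ K)
    {f : Lp ℝ 2 P} (hf : f ∈ feasibleSublevel P ρ φ K v c) : ‖f‖ ≤ K := by
  simpa [measureUnivNNReal] using
    Lp.norm_le_of_ae_bound hK (hf.1.abs_le.mono fun _ h => by rwa [Real.norm_eq_abs])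

end Sublevel

theorem neyman_pearson_existence_general
    {Ω : Type*} [MeasurableSpace Ω] (P : Measure Ω) [IsProbabilityMeasure P]
    (φ : Ω → ℝ) (hφint : Integrable φ P)
    (hφ1 : ∫ ω, φ ω ∂P = 1)
    (K v : ℝ) (hv : v ∈ Icc 0 K)
    (ρ : (Ω → ℝ) → ℝ) (hmono : RMono P ρ) (hconv : RConvex P ρ)
    (hcont : RContFromAbove P ρ) :
    ∃ X : Ω → ℝ, IsNPSolution P ρ φ K v X := by
  set m := sInf ((fun X => ρ (fun ω => -X ω)) '' {X | Feasible P φ K v X})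
  have hbdd : BddBelow ((fun X => ρ (fun ω => -X ω)) '' {X | Feasible P φ K v X}) := by
    refine ⟨ρ (fun _ => -0), ?_⟩
    rintro _ ⟨Y, hY, rfl⟩
    exact hmono _ Y (memLp_top_const 0) hY.1 (hY.2.1.mono fun _ h => h.1)
  have hm_le : ∀ X, Feasible P φ K v X → m ≤ ρ (fun ω => -X ω) := fun X hX =>
    csInf_le hbdd ⟨X, hX, rfl⟩
  have hne : ((fun X => ρ (fun ω => -X ω)) '' {X | Feasible P φ K v X}).Nonempty :=
    ⟨_, _, feasible_const hφ1 hv, rfl⟩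
  set C : ℕ → Set (Lp ℝ 2 P) := fun n => feasibleSublevel P ρ φ K v (m + 1 / (n + 1))
  have hC : ∀ n, (C n).Nonempty := fun n => by
    obtain ⟨_, ⟨X, hX, rfl⟩, hlt⟩ := exists_lt_of_csInf_lt hne
      (lt_add_of_pos_right m (Nat.one_div_pos_of_nat (n := n)))
    exact feasibleSublevel_nonempty hcont hX hlt.le
  obtain ⟨x, hxC, hx⟩ := exists_cauchySeq_mem_of_antitone_convex
    (fun _ _ h => feasibleSublevel_mono (by gcongr)) hC
    (fun _ => convex_feasibleSublevel hφint hcont hconv)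
    (fun _ hf => norm_le_of_mem_feasibleSublevel (hv.1.trans hv.2) hf)
  obtain ⟨f, hf⟩ := cauchySeq_tendsto_of_complete hx
  obtain ⟨ns, hns, hae⟩ := (tendstoInMeasure_of_tendsto_Lp hf).exists_seq_tendsto_ae
  have hfeas : Feasible P φ K v f :=
    .of_tendsto_ae hφint (fun k => (hxC (ns k)).1) (Lp.aestronglyMeasurable f) hae
  have hρ : ρ (fun ω => -f ω) ≤ m := by
    refine hcont.le_of_tendsto_ae hmono (fun k => (hxC (ns k)).1.1) hfeas.1
      (ae_all_iff.2 fun k => (hxC (ns k)).1.abs_le) hae ?_ fun k => (hxC (ns k)).2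
    simpa only [add_zero, Function.comp_def] using (tendsto_const_nhds (x := m)).add
      (tendsto_one_div_add_atTop_nhds_zero_nat.comp hns.tendsto_atTop)
  exact ⟨f, hfeas, fun Y hY => hρ.trans (hm_le Y hY)⟩

/-- Lemma 2.1: under monotonicity, convexity and continuity from above,
the Neyman–Pearson problem at level `v` has a solution. -/
theorem neyman_pearson_existence
    {Ω : Type*} [MeasurableSpace Ω] (P : Measure Ω) [IsProbabilityMeasure P]
    (hP : Atomless P)
    (φ : Ω → ℝ) (hφm : Measurable φ) (hφint : Integrable φ P)
    (hφpos : ∀ᵐ ω ∂P, 0 < φ ω) (hφ1 : ∫ ω, φ ω ∂P = 1)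
    (K v : ℝ) (hK : 0 < K) (hv : v ∈ Icc 0 K)
    (ρ : (Ω → ℝ) → ℝ) (hmono : RMono P ρ) (hconv : RConvex P ρ)
    (hcont : RContFromAbove P ρ) :
    ∃ X : Ω → ℝ, IsNPSolution P ρ φ K v X :=
  neyman_pearson_existence_general P φ hφint hφ1 K v hv ρ hmono hconv hcont
end

section
/- Suppose ρ : L^∞(Ω,𝓕,P) → ℝ satisfies monotonicity (X ≤ Y P-a.s. implies ρ(−X) ≤ ρ(−Y)), convexity (ρ(tX+(1−t)Y) ≤ tρ(X)+(1−t)ρ(Y) for all t ∈ [0,1]), law invariance (ρ(X) = ρ(Y) whenever X and Y have the same law under P), continuity from above (X_n ↓ X P-a.s. implies ρ(X_n) ↑ ρ(X)), and that the map m ↦ ρ(−m) on real constants is continuous and strictly increasing on [0,K]. Then any solution X* of the Neyman–Pearson problem with capital constraint v ∈ [0,K] satisfies E[φX*] = v. -/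
/-!
Suppose `E[φX] > v` for a solution `X`. Then `sX` with `s = v / E[φX] < 1` is still feasible,
so optimality and convexity give `ρ(-X) ≤ ρ(-sX) ≤ (1 - s) ρ(0) + s ρ(-X)`, i.e. `ρ(-X) ≤ ρ(0)`.
As `X ≥ 0` is not a.s. zero, it dominates some `δ 1_A` with `P A > 0`, hence `ρ(-δ 1_A) ≤ ρ(0)`.
By induction on `k`, `ρ(-δ 2⁻ᵏ 1_B) ≤ ρ(0)` whenever `P B ≤ 2ᵏ P A`: for `k = 0`, law invariance
and monotonicity on an atomless space make `ρ(-c 1_B)` grow with `P B`; the inductive step splits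
`B` into two halves of equal mass and applies convexity. Taking `B = Ω` gives `ρ(-δ 2⁻ᵏ) ≤ ρ(0)`,
contradicting strict monotonicity of `m ↦ ρ(-m)`.
-/

open MeasureTheory Filter Topology Set

/-- Law invariance: `ρ(X) = ρ(Y)` whenever `X` and `Y` have the same law under `P`. -/
def RLawInvariant {Ω : Type*} [MeasurableSpace Ω] (P : Measure Ω) (ρ : (Ω → ℝ) → ℝ) : Prop :=
  ∀ X Y : Ω → ℝ, MemLp X ⊤ P → MemLp Y ⊤ P →
    Measure.map X P = Measure.map Y P → ρ X = ρ Y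

/-- Condition (13): on real constants, `m ↦ ρ(−m)` is continuous and strictly
increasing on `[0, K]`. -/
def RConstIncreasing {Ω : Type*} [MeasurableSpace Ω] (ρ : (Ω → ℝ) → ℝ) (K : ℝ) : Prop :=
  ContinuousOn (fun m : ℝ => ρ (fun _ => -m)) (Icc 0 K) ∧
    StrictMonoOn (fun m : ℝ => ρ (fun _ => -m)) (Icc 0 K)

open scoped ENNReal

namespace Atomless

variable {Ω : Type*} [MeasurableSpace Ω] {P : Measure Ω}

theorem exists_subset_two_mul_measure_le (hP : Atomless P) {A : Set Ω} (hA : MeasurableSet A)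
    (h0 : 0 < P A) : ∃ B ⊆ A, MeasurableSet B ∧ 0 < P B ∧ 2 * P B ≤ P A := by
  obtain ⟨B, hBm, hBA, hB0, hBA'⟩ := hP A hA h0
  have hsum : P (A \ B) + P B = P A := by
    rw [← measure_sdiff_add_inter A hBm, inter_eq_right.mpr hBA]
  have hdiff0 : 0 < P (A \ B) :=
    pos_iff_ne_zero.mpr fun h => hBA'.ne (by rwa [h, zero_add] at hsum)
  -- the smaller of the two pieces has at most half the mass
  rcases le_total (P B) (P (A \ B)) with hle | hle
  · exact ⟨B, hBA, hBm, hB0, by rw [two_mul, ← hsum, add_comm]; gcongr⟩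
  · exact ⟨A \ B, sdiff_subset, hA.diff hBm, hdiff0, by rw [two_mul, ← hsum]; gcongr⟩

variable [IsFiniteMeasure P]

theorem exists_subset_measure_pos_le (hP : Atomless P) {A : Set Ω} (hA : MeasurableSet A)
    (h0 : 0 < P A) {ε : ℝ≥0∞} (hε : 0 < ε) : ∃ B ⊆ A, MeasurableSet B ∧ 0 < P B ∧ P B ≤ ε := by
  have hpow : ∀ n : ℕ, ∃ B ⊆ A, MeasurableSet B ∧ 0 < P B ∧ 2 ^ n * P B ≤ P A := by
    intro n
    induction n with
    | zero => exact ⟨A, subset_rfl, hA, h0, by simp⟩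
    | succ n ih =>
      obtain ⟨B, hBA, hBm, hB0, hBle⟩ := ih
      obtain ⟨C, hCB, hCm, hC0, hCle⟩ := hP.exists_subset_two_mul_measure_le hBm hB0
      refine ⟨C, hCB.trans hBA, hCm, hC0, ?_⟩
      calc 2 ^ (n + 1) * P C = 2 ^ n * (2 * P C) := by rw [pow_succ, mul_assoc]
        _ ≤ 2 ^ n * P B := by gcongr
        _ ≤ P A := hBle
  obtain ⟨n, hn⟩ := ENNReal.exists_nat_mul_gt hε.ne' (measure_ne_top P A)
  obtain ⟨B, hBA, hBm, hB0, hBle⟩ := hpow n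
  refine ⟨B, hBA, hBm, hB0, le_of_not_gt fun hεB => ?_⟩
  have hn2 : (n : ℝ≥0∞) ≤ 2 ^ n := by exact_mod_cast Nat.lt_two_pow_self.le
  exact (hn.trans_le ((mul_le_mul' hn2 hεB.le).trans hBle)).false

theorem exists_subset_measure_eq (hP : Atomless P) {S : Set Ω} (hS : MeasurableSet S)
    {r : ℝ≥0∞} (hr : r ≤ P S) : ∃ C ⊆ S, MeasurableSet C ∧ P C = r := by
  classical
  let Ext : Set Ω → Set (Set Ω) := fun D => {E | MeasurableSet E ∧ E ⊆ S \ D ∧ P (D ∪ E) ≤ r}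
  -- greedy step: an admissible extension carrying at least half of the largest possible mass
  have hnext : ∀ D, P D ≤ r → ∃ E ∈ Ext D, ∀ E' ∈ Ext D, P E' ≤ 2 * P E := by
    intro D hD
    have hsup : ∀ E' ∈ Ext D, P E' ≤ ⨆ E ∈ Ext D, P E := fun E' hE' => le_biSup P hE'
    rcases eq_or_ne (⨆ E ∈ Ext D, P E) 0 with hg | hg
    · exact ⟨∅, ⟨.empty, empty_subset _, by simpa⟩, fun E' hE' => by simpa [hg] using hsup E' hE'⟩
    · have hgtop : (⨆ E ∈ Ext D, P E) ≠ ∞ := ne_top_of_le_ne_top (measure_ne_top P univ)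
        (iSup₂_le fun E _ => measure_mono (subset_univ E))
      obtain ⟨E, hE, hlt⟩ := lt_biSup_iff.mp (ENNReal.half_lt_self hg hgtop)
      refine ⟨E, hE, fun E' hE' => (hsup E' hE').trans ?_⟩
      rw [mul_comm, ← ENNReal.div_le_iff_le_mul (.inl two_ne_zero) (.inl ENNReal.ofNat_ne_top)]
      exact hlt.le
  choose! next hnextExt hnextMax using hnext
  let C : ℕ → Set Ω := fun n => Nat.rec ∅ (fun _ C => C ∪ next C) n
  have hC : ∀ n, MeasurableSet (C n) ∧ C n ⊆ S ∧ P (C n) ≤ r := by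
    intro n
    induction n with
    | zero => exact ⟨.empty, empty_subset _, by simp [C]⟩
    | succ n ih =>
      obtain ⟨hEm, hES, hEr⟩ := hnextExt (C n) ih.2.2
      exact ⟨ih.1.union hEm, union_subset ih.2.1 (hES.trans sdiff_subset), hEr⟩
  have hCmono : Monotone C := monotone_nat_of_le_succ fun n => subset_union_left
  have hCr : P (⋃ n, C n) ≤ r := by
    rw [hCmono.measure_iUnion]
    exact iSup_le fun n => (hC n).2.2
  refine ⟨⋃ n, C n, iUnion_subset fun n => (hC n).2.1, .iUnion fun n => (hC n).1,
    le_antisymm hCr (not_lt.mp fun hlt => ?_)⟩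
  have hgap : 0 < P (S \ ⋃ n, C n) :=
    (tsub_pos_of_lt (hlt.trans_le hr)).trans_le le_measure_sdiff
  obtain ⟨E₀, hE₀, hE₀m, hE₀0, hE₀le⟩ := hP.exists_subset_measure_pos_le
    (hS.diff (.iUnion fun n => (hC n).1)) hgap (tsub_pos_of_lt hlt)
  -- `E₀` stays admissible at every stage, so every greedy step adds at least `P E₀ / 2`
  have hE₀Ext : ∀ n, E₀ ∈ Ext (C n) := fun n =>
    ⟨hE₀m, hE₀.trans (sdiff_subset_sdiff_right (subset_iUnion C n)),
      calc P (C n ∪ E₀) ≤ P (C n) + P E₀ := measure_union_le _ _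
        _ ≤ P (⋃ n, C n) + (r - P (⋃ n, C n)) :=
          add_le_add (measure_mono (subset_iUnion C n)) hE₀le
        _ = r := add_tsub_cancel_of_le hCr⟩
  have hgrow : ∀ n : ℕ, n * P E₀ ≤ 2 * P (C n) := by
    intro n
    induction n with
    | zero => simp
    | succ n ih =>
      have hdisj : Disjoint (C n) (next (C n)) :=
        disjoint_sdiff_right.mono_right (hnextExt (C n) (hC n).2.2).2.1
      calc ((n + 1 : ℕ) : ℝ≥0∞) * P E₀ = n * P E₀ + P E₀ := by push_cast; ring
        _ ≤ 2 * P (C n) + 2 * P (next (C n)) :=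
          add_le_add ih (hnextMax (C n) (hC n).2.2 E₀ (hE₀Ext n))
        _ = 2 * P (C (n + 1)) := by
          rw [← mul_add, ← measure_union hdisj (hnextExt (C n) (hC n).2.2).1]
  have h2P : 2 * P univ ≠ ∞ := ENNReal.mul_ne_top (by simp) (measure_ne_top P univ)
  obtain ⟨n, hn⟩ := ENNReal.exists_nat_mul_gt hE₀0.ne' h2P
  exact (hn.trans_le ((hgrow n).trans (by gcongr; exact subset_univ _))).false

theorem exists_superset_measure_eq (hP : Atomless P) {B : Set Ω} (hB : MeasurableSet B)
    {r : ℝ≥0∞} (hBr : P B ≤ r) (hr : r ≤ P univ) : ∃ C, B ⊆ C ∧ MeasurableSet C ∧ P C = r := by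
  have hcompl : r - P B ≤ P Bᶜ := by
    rw [measure_compl hB (measure_ne_top P B)]
    exact tsub_le_tsub_right hr _
  obtain ⟨C, hCB, hCm, hPC⟩ := hP.exists_subset_measure_eq hB.compl hcompl
  refine ⟨B ∪ C, subset_union_left, hB.union hCm, ?_⟩
  rw [measure_union (disjoint_compl_right.mono_right hCB) hCm, hPC, add_tsub_cancel_of_le hBr]

end Atomless

theorem map_indicator_const_eq_of_measure_eq {Ω β : Type*} [MeasurableSpace Ω] [MeasurableSpace β]
    [Zero β] {μ : Measure Ω} [IsFiniteMeasure μ] {A B : Set Ω} (hA : MeasurableSet A)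
    (hB : MeasurableSet B) (hAB : μ A = μ B) (c : β) :
    μ.map (A.indicator fun _ => c) = μ.map (B.indicator fun _ => c) := by
  classical
  ext U hU
  rw [Measure.map_apply (measurable_const.indicator hA) hU,
    Measure.map_apply (measurable_const.indicator hB) hU,
    indicator_const_preimage_eq_union, indicator_const_preimage_eq_union]
  split_ifs <;>
    simp [measure_compl hA (measure_ne_top μ A), measure_compl hB (measure_ne_top μ B), hAB]

theorem exists_pos_indicator_le {Ω : Type*} [MeasurableSpace Ω] {P : Measure Ω} {X : Ω → ℝ}
    (hXm : AEMeasurable X P) (hX0 : 0 ≤ᵐ[P] X) (hX : ¬ X =ᵐ[P] 0) :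
    ∃ δ > 0, ∃ A, MeasurableSet A ∧ 0 < P A ∧ A.indicator (fun _ => δ) ≤ᵐ[P] X := by
  set Y := hXm.mk X
  have hXY : X =ᵐ[P] Y := hXm.ae_eq_mk
  have hpos : P {ω | 0 < Y ω} ≠ 0 := fun h => hX <| by
    have hY0 : ∀ᵐ ω ∂P, Y ω ≤ 0 := by simpa [ae_iff] using h
    filter_upwards [hXY, hX0, hY0] with ω hXYω hX0ω hY0ω
    exact le_antisymm (hXYω ▸ hY0ω) hX0ω
  have hunion : {ω | 0 < Y ω} = ⋃ n : ℕ, {ω | 1 / ((n : ℝ) + 1) ≤ Y ω} := by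
    ext ω
    simp only [mem_ofPred_eq, mem_iUnion]
    exact ⟨fun h => (exists_nat_one_div_lt h).imp fun _ => le_of_lt,
      fun ⟨n, hn⟩ => lt_of_lt_of_le Nat.one_div_pos_of_nat hn⟩
  obtain ⟨n, hn⟩ := exists_measure_pos_of_not_measure_iUnion_null (hunion ▸ hpos)
  refine ⟨1 / ((n : ℝ) + 1), Nat.one_div_pos_of_nat, {ω | 1 / ((n : ℝ) + 1) ≤ Y ω},
    hXm.measurable_mk measurableSet_Ici, hn, ?_⟩
  filter_upwards [hXY, hX0] with ω hXYω hX0ω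
  by_cases hω : ω ∈ {ω | 1 / ((n : ℝ) + 1) ≤ Y ω}
  · rwa [indicator_of_mem hω, hXYω]
  · rwa [indicator_of_notMem hω]

section RiskMeasure

variable {Ω : Type*} [MeasurableSpace Ω] {P : Measure Ω} {ρ : (Ω → ℝ) → ℝ}

theorem IsNPSolution.rho_neg_le_rho_zero {φ X : Ω → ℝ} {K v : ℝ} (hconv : RConvex P ρ)
    (hX : IsNPSolution P ρ φ K v X) (hv : 0 ≤ v) (hlt : v < ∫ ω, φ ω * X ω ∂P) :
    ρ (fun ω => -X ω) ≤ ρ 0 := by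
  obtain ⟨⟨hXm, hXb, -⟩, hopt⟩ := hX
  set e := ∫ ω, φ ω * X ω ∂P
  have he : 0 < e := hv.trans_lt hlt
  set s := v / e
  have hs0 : 0 ≤ s := by positivity
  have hs1 : s < 1 := (div_lt_one he).mpr hlt
  have hsX : Feasible P φ K v (fun ω => s * X ω) := by
    refine ⟨hXm.const_mul s, hXb.mono fun ω h => ⟨mul_nonneg hs0 h.1,
      (mul_le_of_le_one_left h.1 hs1.le).trans h.2⟩, ?_⟩
    simp_rw [mul_left_comm _ s, integral_const_mul]
    exact (div_mul_cancel₀ v he.ne').ge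
  have hmix : ρ (fun ω => -(s * X ω)) ≤ (1 - s) * ρ 0 + (1 - (1 - s)) * ρ (fun ω => -X ω) := by
    convert hconv 0 (fun ω => -X ω) MemLp.zero hXm.neg (1 - s) (by linarith) (by linarith)
      using 2
    funext ω
    simp only [Pi.zero_apply]
    ring
  nlinarith [(hopt _ hsX).trans hmix]

variable [IsFiniteMeasure P]

theorem RConvex.rho_neg_indicator_div_two_le (hconv : RConvex P ρ) {B₁ B : Set Ω}
    (hB₁ : MeasurableSet B₁) (hB : MeasurableSet B) (hB₁B : B₁ ⊆ B) (c : ℝ) :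
    ρ (fun ω => -B.indicator (fun _ => c / 2) ω) ≤
      (ρ (fun ω => -B₁.indicator (fun _ => c) ω) +
        ρ (fun ω => -(B \ B₁).indicator (fun _ => c) ω)) / 2 := by
  convert hconv (fun ω => -B₁.indicator (fun _ => c) ω)
    (fun ω => -(B \ B₁).indicator (fun _ => c) ω) ((memLp_const c).indicator hB₁).neg
    ((memLp_const c).indicator (hB.diff hB₁)).neg 2⁻¹ (by norm_num) (by norm_num) using 1
  · congr 1
    funext ω
    by_cases h₁ : ω ∈ B₁
    · simp [h₁, hB₁B h₁]
      ring
    · by_cases h : ω ∈ B <;> simp [h₁, h]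
      ring
  · ring

theorem rho_neg_indicator_le_of_measure_le (hP : Atomless P) (hmono : RMono P ρ)
    (hlaw : RLawInvariant P ρ) {A B : Set Ω} (hA : MeasurableSet A) (hB : MeasurableSet B)
    (hBA : P B ≤ P A) {c : ℝ} (hc : 0 ≤ c) :
    ρ (fun ω => -B.indicator (fun _ => c) ω) ≤ ρ (fun ω => -A.indicator (fun _ => c) ω) := by
  obtain ⟨B', hBB', hB'm, hB'A⟩ :=
    hP.exists_superset_measure_eq hB hBA (measure_mono (subset_univ A))
  calc ρ (fun ω => -B.indicator (fun _ => c) ω)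
      ≤ ρ (fun ω => -B'.indicator (fun _ => c) ω) :=
        hmono _ _ ((memLp_const c).indicator hB) ((memLp_const c).indicator hB'm)
          (.of_forall (indicator_le_indicator_of_subset hBB' fun _ => hc))
    _ = ρ (fun ω => -A.indicator (fun _ => c) ω) := by
        simp only [← indicator_neg]
        exact hlaw _ _ ((memLp_const _).indicator hB'm) ((memLp_const _).indicator hA)
          (map_indicator_const_eq_of_measure_eq hB'm hA hB'A _)

theorem rho_neg_indicator_div_two_pow_le (hP : Atomless P) (hmono : RMono P ρ)
    (hconv : RConvex P ρ) (hlaw : RLawInvariant P ρ) {A : Set Ω} (hA : MeasurableSet A) {δ : ℝ}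
    (hδ : 0 ≤ δ) (hAρ : ρ (fun ω => -A.indicator (fun _ => δ) ω) ≤ ρ 0) (k : ℕ) {B : Set Ω}
    (hB : MeasurableSet B) (hBA : P B ≤ 2 ^ k * P A) :
    ρ (fun ω => -B.indicator (fun _ => δ / 2 ^ k) ω) ≤ ρ 0 := by
  induction k generalizing B with
  | zero =>
    simp only [pow_zero, one_mul, div_one] at hBA ⊢
    exact (rho_neg_indicator_le_of_measure_le hP hmono hlaw hA hB hBA hδ).trans hAρ
  | succ k ih =>
    obtain ⟨B₁, hB₁B, hB₁m, hPB₁⟩ :=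
      hP.exists_subset_measure_eq hB (ENNReal.half_le_self (a := P B))
    have hPB₂ : P (B \ B₁) = P B / 2 := by
      rw [measure_sdiff hB₁B hB₁m.nullMeasurableSet (measure_ne_top P B₁), hPB₁,
        ENNReal.sub_half (measure_ne_top P B)]
    have hhalf : P B / 2 ≤ 2 ^ k * P A :=
      ENNReal.div_le_of_le_mul (by rwa [mul_right_comm, ← pow_succ])
    calc ρ (fun ω => -B.indicator (fun _ => δ / 2 ^ (k + 1)) ω)
        = ρ (fun ω => -B.indicator (fun _ => δ / 2 ^ k / 2) ω) := by rw [pow_succ, div_div]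
      _ ≤ (ρ 0 + ρ 0) / 2 := by
        refine (hconv.rho_neg_indicator_div_two_le hB₁m hB hB₁B _).trans ?_
        gcongr
        exacts [ih hB₁m (hPB₁ ▸ hhalf), ih (hB.diff hB₁m) (hPB₂ ▸ hhalf)]
      _ = ρ 0 := add_self_div_two _

theorem exists_pos_const_rho_le (hP : Atomless P) (hmono : RMono P ρ)
    (hconv : RConvex P ρ) (hlaw : RLawInvariant P ρ) {A : Set Ω} (hA : MeasurableSet A)
    (hPA : 0 < P A) {δ : ℝ} (hδ : 0 < δ) (hAρ : ρ (fun ω => -A.indicator (fun _ => δ) ω) ≤ ρ 0) :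
    ∃ c, 0 < c ∧ c ≤ δ ∧ ρ (fun _ => -c) ≤ ρ 0 := by
  obtain ⟨k, hk⟩ := ENNReal.exists_nat_mul_gt hPA.ne' (measure_ne_top P univ)
  have hk' : P univ ≤ 2 ^ k * P A := by
    refine hk.le.trans (mul_le_mul_left ?_ _)
    exact_mod_cast Nat.lt_two_pow_self.le
  refine ⟨δ / 2 ^ k, by positivity, div_le_self hδ.le (one_le_pow₀ one_le_two), ?_⟩
  simpa using rho_neg_indicator_div_two_pow_le hP hmono hconv hlaw hA hδ.le hAρ k .univ hk'

end RiskMeasure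

theorem solution_budget_eq_general
    {Ω : Type*} [MeasurableSpace Ω] (P : Measure Ω) [IsProbabilityMeasure P]
    (hP : Atomless P)
    (φ : Ω → ℝ)
    (K v : ℝ) (hK : 0 < K) (hv : v ∈ Icc 0 K)
    (ρ : (Ω → ℝ) → ℝ) (hmono : RMono P ρ) (hconv : RConvex P ρ)
    (hlaw : RLawInvariant P ρ)
    (hconst : RConstIncreasing ρ K)
    (X : Ω → ℝ) (hX : IsNPSolution P ρ φ K v X) :
    ∫ ω, φ ω * X ω ∂P = v := by
  refine le_antisymm (not_lt.mp fun hlt => ?_) hX.1.2.2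
  obtain ⟨hXm, hXb, -⟩ := hX.1
  have hXρ : ρ (fun ω => -X ω) ≤ ρ 0 := hX.rho_neg_le_rho_zero hconv hv.1 hlt
  have hXne : ¬ X =ᵐ[P] 0 := fun h => by
    have : ∫ ω, φ ω * X ω ∂P = 0 := integral_eq_zero_of_ae (h.mono fun ω hω => by simp [hω])
    linarith [hv.1]
  obtain ⟨δ, hδ, A, hA, hPA, hAX⟩ :=
    exists_pos_indicator_le hXm.1.aemeasurable (hXb.mono fun _ h => h.1) hXne
  have hAρ : ρ (fun ω => -A.indicator (fun _ => min δ K) ω) ≤ ρ 0 :=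
    (hmono _ _ ((memLp_const _).indicator hA) hXm (hAX.mono fun ω h =>
      (indicator_le_indicator (min_le_left δ K)).trans h)).trans hXρ
  obtain ⟨c, hc0, hcK, hcρ⟩ :=
    exists_pos_const_rho_le hP hmono hconv hlaw hA hPA (lt_min hδ hK) hAρ
  have hlt0 := hconst.2 (left_mem_Icc.2 hK.le) ⟨hc0.le, hcK.trans (min_le_right δ K)⟩ hc0
  simp only [neg_zero] at hlt0
  exact hlt0.not_ge hcρ

/-- Lemma 2.4: any solution `X*` of the Neyman–Pearson problem with capital
constraint `v ∈ [0, K]` satisfies `E[φX*] = v`. -/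
theorem solution_budget_eq
    {Ω : Type*} [MeasurableSpace Ω] (P : Measure Ω) [IsProbabilityMeasure P]
    (hP : Atomless P)
    (φ : Ω → ℝ) (hφm : Measurable φ) (hφint : Integrable φ P)
    (hφpos : ∀ᵐ ω ∂P, 0 < φ ω) (hφ1 : ∫ ω, φ ω ∂P = 1)
    (K v : ℝ) (hK : 0 < K) (hv : v ∈ Icc 0 K)
    (ρ : (Ω → ℝ) → ℝ) (hmono : RMono P ρ) (hconv : RConvex P ρ)
    (hlaw : RLawInvariant P ρ) (hcont : RContFromAbove P ρ)
    (hconst : RConstIncreasing ρ K)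
    (X : Ω → ℝ) (hX : IsNPSolution P ρ φ K v X) :
    ∫ ω, φ ω * X ω ∂P = v :=
  solution_budget_eq_general P hP φ K v hK hv ρ hmono hconv hlaw hconst X hX
end

section
/- Suppose ρ : L^∞(Ω,𝓕,P) → ℝ satisfies monotonicity (X ≤ Y P-a.s. implies ρ(−X) ≤ ρ(−Y)), convexity (ρ(tX+(1−t)Y) ≤ tρ(X)+(1−t)ρ(Y) for all t ∈ [0,1]), law invariance (ρ(X) = ρ(Y) whenever X and Y have the same law under P), continuity from above (X_n ↓ X P-a.s. implies ρ(X_n) ↑ ρ(X)), and that m ↦ ρ(−m) is continuous and strictly increasing on [0,K]. If φ has a continuous distribution function and the Neyman–Pearson problem at level v has at most one σ(φ)-measurable solution up to P-null sets, then it has at most one solution up to P-null sets in the class of all 𝓕-measurable random variables. -/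
/-!
Solutions form a convex set because `ρ` is convex, and every solution `X` can be replaced by a
`σ(φ)`-measurable solution with the same law: the quantile function of `X` composed with
`F_φ(φ)`, which is uniform on `[0, 1]` since `F_φ` is continuous. Law invariance keeps the risk,
and by the Hardy–Littlewood rearrangement inequality `E[φ X]` can only increase, as the new
variable is comonotone with `φ`. If `X` and `Y` are solutions, so is `Z = (X + Y) / 2`, and
uniqueness among `σ(φ)`-measurable solutions forces `X`, `Y` and `Z` to share one law. Their
second moments then agree, so `E[(X - Y)²] = 2 E[X²] + 2 E[Y²] - 4 E[Z²] = 0`.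
-/

open MeasureTheory Filter Topology Set

open ProbabilityTheory
open scoped ENNReal

section Rearrangement

variable {Ω : Type*} [MeasurableSpace Ω] {P : Measure Ω}

theorem setLIntegral_le_setLIntegral_of_measure_eq [IsFiniteMeasure P] {ψ : Ω → ℝ≥0∞}
    {B C : Set Ω} (hB : MeasurableSet B) (hC : MeasurableSet C) (hBC : P B = P C)
    (hψ : ∀ ω ∈ C, ∀ ω' ∉ C, ψ ω' ≤ ψ ω) :
    ∫⁻ ω in B, ψ ω ∂P ≤ ∫⁻ ω in C, ψ ω ∂P := by
  -- `ψ ≥ c` on `C` and `ψ ≤ c` off `C`, while `B \ C` and `C \ B` have the same mass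
  set c := ⨅ ω ∈ C, ψ ω
  have hsdiff : P (B \ C) = P (C \ B) :=
    measure_sdiff_symm hB.nullMeasurableSet hC.nullMeasurableSet hBC (measure_ne_top _ _)
  calc ∫⁻ ω in B, ψ ω ∂P = ∫⁻ ω in B ∩ C, ψ ω ∂P + ∫⁻ ω in B \ C, ψ ω ∂P :=
        (lintegral_inter_add_sdiff _ _ hC).symm
    _ ≤ ∫⁻ ω in B ∩ C, ψ ω ∂P + ∫⁻ _ in C \ B, c ∂P := by
        rw [setLIntegral_const, ← hsdiff, ← setLIntegral_const]
        exact add_le_add le_rfl <| setLIntegral_mono' (hB.diff hC) fun ω hω =>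
          le_iInf₂ fun ω' hω' => hψ ω' hω' ω hω.2
    _ ≤ ∫⁻ ω in C ∩ B, ψ ω ∂P + ∫⁻ ω in C \ B, ψ ω ∂P := by
        rw [inter_comm]
        exact add_le_add le_rfl <| setLIntegral_mono' (hC.diff hB) fun ω hω => iInf₂_le ω hω.1
    _ = ∫⁻ ω in C, ψ ω ∂P := lintegral_inter_add_sdiff _ _ hB

theorem lintegral_mul_le_lintegral_mul_of_comonotone [IsFiniteMeasure P] {ψ : Ω → ℝ≥0∞}
    (hψ : Measurable ψ) {W W' : Ω → ℝ} (hW : Measurable W) (hW' : Measurable W')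
    (hW0 : 0 ≤ᵐ[P] W) (hW'0 : 0 ≤ᵐ[P] W') (hlaw : P.map W = P.map W')
    (hcomono : ∀ ω ω', W' ω' < W' ω → ψ ω' ≤ ψ ω) :
    ∫⁻ ω, ψ ω * ENNReal.ofReal (W ω) ∂P ≤ ∫⁻ ω, ψ ω * ENNReal.ofReal (W' ω) ∂P := by
  have hlayer : ∀ V : Ω → ℝ, Measurable V → 0 ≤ᵐ[P] V →
      ∫⁻ ω, ψ ω * ENNReal.ofReal (V ω) ∂P = ∫⁻ t in Ioi 0, P.withDensity ψ {ω | t < V ω} := by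
    intro V hV hV0
    rw [← lintegral_eq_lintegral_meas_lt _ (withDensity_absolutelyContinuous P ψ |>.ae_le hV0)
      hV.aemeasurable, lintegral_withDensity_eq_lintegral_mul P hψ hV.ennreal_ofReal]
    rfl
  rw [hlayer W hW hW0, hlayer W' hW' hW'0]
  refine lintegral_mono fun t => ?_
  rw [withDensity_apply _ (measurableSet_lt measurable_const hW),
    withDensity_apply _ (measurableSet_lt measurable_const hW')]
  refine setLIntegral_le_setLIntegral_of_measure_eq (measurableSet_lt measurable_const hW)
    (measurableSet_lt measurable_const hW') ?_ fun ω hω ω' hω' => hcomono ω ω' ?_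
  · change P (W ⁻¹' Ioi t) = P (W' ⁻¹' Ioi t)
    rw [← Measure.map_apply hW measurableSet_Ioi, hlaw, Measure.map_apply hW' measurableSet_Ioi]
  · exact (not_lt.mp hω').trans_lt hω

theorem integral_mul_le_integral_mul_of_comonotone [IsFiniteMeasure P] {φ W W' : Ω → ℝ}
    (hφ : Measurable φ) (hφ0 : 0 ≤ᵐ[P] φ) (hW : Measurable W) (hW' : Measurable W')
    (hW0 : 0 ≤ᵐ[P] W) (hW'0 : 0 ≤ᵐ[P] W') (hlaw : P.map W = P.map W')
    (hint : Integrable (fun ω => φ ω * W' ω) P)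
    (hcomono : ∀ ω ω', W' ω' < W' ω → φ ω' ≤ φ ω) :
    ∫ ω, φ ω * W ω ∂P ≤ ∫ ω, φ ω * W' ω ∂P := by
  have hofReal : ∀ V : Ω → ℝ, 0 ≤ᵐ[P] V → ∫⁻ ω, ENNReal.ofReal (φ ω * V ω) ∂P =
      ∫⁻ ω, ENNReal.ofReal (φ ω) * ENNReal.ofReal (V ω) ∂P := fun V hV0 =>
    lintegral_congr_ae <| by filter_upwards [hφ0] with ω h using ENNReal.ofReal_mul h
  have hnonneg : ∀ V : Ω → ℝ, 0 ≤ᵐ[P] V → 0 ≤ᵐ[P] fun ω => φ ω * V ω := fun V hV0 => by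
    filter_upwards [hφ0, hV0] with ω h h' using mul_nonneg h h'
  rw [integral_eq_lintegral_of_nonneg_ae (hnonneg W hW0) (hφ.mul hW).aestronglyMeasurable,
    integral_eq_lintegral_of_nonneg_ae (hnonneg W' hW'0) (hφ.mul hW').aestronglyMeasurable,
    hofReal W hW0, hofReal W' hW'0]
  refine ENNReal.toReal_mono ?_ <| lintegral_mul_le_lintegral_mul_of_comonotone
    hφ.ennreal_ofReal hW hW' hW0 hW'0 hlaw fun ω ω' h => ENNReal.ofReal_le_ofReal (hcomono ω ω' h)
  exact hofReal W' hW'0 ▸ hint.lintegral_lt_top.ne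

end Rearrangement

-- Restricting to `t ≥ 0` and clipping `u` at `1` keeps the set nonempty and bounded below as soon
-- as `G K ≥ 1` for some `K ≥ 0`, so that `sInf` is never a junk value.
noncomputable def nonnegQuantile (G : StieltjesFunction ℝ) (u : ℝ) : ℝ :=
  sInf {t | 0 ≤ t ∧ min u 1 ≤ G t}

section Quantile

variable {G : StieltjesFunction ℝ} {K : ℝ}

theorem nonnegQuantile_set_nonempty (hK : 0 ≤ K) (hGK : 1 ≤ G K) (u : ℝ) :
    {t | 0 ≤ t ∧ min u 1 ≤ G t}.Nonempty :=
  ⟨K, hK, (min_le_right u 1).trans hGK⟩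

theorem nonnegQuantile_set_bddBelow {u : ℝ} : BddBelow {t | 0 ≤ t ∧ min u 1 ≤ G t} :=
  ⟨0, fun _ ht => ht.1⟩

theorem nonnegQuantile_mem_Icc (hK : 0 ≤ K) (hGK : 1 ≤ G K) (u : ℝ) :
    nonnegQuantile G u ∈ Icc 0 K :=
  ⟨le_csInf (nonnegQuantile_set_nonempty hK hGK u) fun _ ht => ht.1,
    csInf_le nonnegQuantile_set_bddBelow ⟨hK, (min_le_right u 1).trans hGK⟩⟩

theorem monotone_nonnegQuantile (hK : 0 ≤ K) (hGK : 1 ≤ G K) : Monotone (nonnegQuantile G) :=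
  fun _ v huv => csInf_le_csInf nonnegQuantile_set_bddBelow
    (nonnegQuantile_set_nonempty hK hGK v) fun _ ht => ⟨ht.1, (min_le_min_right 1 huv).trans ht.2⟩

theorem nonnegQuantile_le_iff (hK : 0 ≤ K) (hGK : 1 ≤ G K) {u t : ℝ} (hu : u ≤ 1)
    (ht : 0 ≤ t) : nonnegQuantile G u ≤ t ↔ u ≤ G t := by
  refine ⟨fun h => ?_, fun h =>
    csInf_le nonnegQuantile_set_bddBelow ⟨ht, (min_le_left u 1).trans h⟩⟩
  have hq : min u 1 ≤ G (nonnegQuantile G u) := by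
    refine ge_of_tendsto ((G.right_continuous _).mono Ioi_subset_Ici_self) ?_
    filter_upwards [self_mem_nhdsWithin] with s hs
    obtain ⟨r, hr, hrs⟩ := exists_lt_of_csInf_lt (nonnegQuantile_set_nonempty hK hGK u) hs
    exact hr.2.trans (G.mono hrs.le)
  exact (le_min le_rfl hu).trans (hq.trans (G.mono h))

end Quantile

theorem measure_cdf_le_eq_ofReal {μ : Measure ℝ} [IsProbabilityMeasure μ]
    (hF : Continuous (cdf μ)) {s : ℝ} (hs : s ∈ Icc 0 1) :
    μ {x | cdf μ x ≤ s} = ENNReal.ofReal s := by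
  rcases hs.2.eq_or_lt with rfl | hs1
  · simp [cdf_le_one]
  obtain ⟨x₀, hx₀⟩ := ((tendsto_cdf_atTop μ).eventually (lt_mem_nhds hs1)).exists_forall_of_atTop
  have hbdd : BddAbove {x | cdf μ x ≤ s} :=
    ⟨x₀, fun x hx => not_lt.mp fun h => (hx₀ x h.le).not_ge hx⟩
  rcases eq_empty_or_nonempty {x | cdf μ x ≤ s} with hempty | hne
  · obtain rfl : s = 0 := hs.1.antisymm' <| not_lt.mp fun hs0 => by
      obtain ⟨x, hx⟩ := ((tendsto_cdf_atBot μ).eventually (gt_mem_nhds hs0)).exists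
      exact hempty.subset (show x ∈ {x | cdf μ x ≤ s} from hx.le)
    simp [hempty]
  set a := sSup {x | cdf μ x ≤ s}
  have hclosed : IsClosed {x | cdf μ x ≤ s} := isClosed_le hF continuous_const
  have ha : cdf μ a ≤ s := hclosed.csSup_mem hne hbdd
  have hIic : {x | cdf μ x ≤ s} = Iic a :=
    Subset.antisymm (fun x hx => le_csSup hbdd hx) fun x hx => (cdf μ).mono hx |>.trans ha
  have hsa : s ≤ cdf μ a := by
    refine ge_of_tendsto (hF.continuousAt.continuousWithinAt (s := Ioi a)) ?_
    filter_upwards [self_mem_nhdsWithin] with x hx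
    exact (not_le.mp fun h => (le_csSup hbdd h).not_gt hx).le
  rw [hIic, ← ofReal_cdf, ha.antisymm hsa]

theorem one_le_cdf_of_ae_le {μ : Measure ℝ} [IsProbabilityMeasure μ] {K : ℝ}
    (h : ∀ᵐ x ∂μ, x ≤ K) : 1 ≤ cdf μ K := by
  have hIic : μ (Iic K) = 1 := by
    rw [← measure_univ (μ := μ)]
    exact (ae_iff_measure_eq measurableSet_Iic.nullMeasurableSet).mp h
  rw [← ENNReal.ofReal_le_ofReal_iff (cdf_nonneg μ K), ofReal_cdf, hIic, ENNReal.ofReal_one]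

theorem map_nonnegQuantile_cdf_comp_of_uniform {Ω : Type*} [MeasurableSpace Ω] {P : Measure Ω}
    [IsFiniteMeasure P] {μ : Measure ℝ} [IsProbabilityMeasure μ] {K : ℝ}
    (hμ : ∀ᵐ x ∂μ, x ∈ Icc 0 K) {U : Ω → ℝ} (hU : Measurable U) (hU1 : ∀ ω, U ω ≤ 1)
    (hUunif : ∀ s ∈ Icc (0 : ℝ) 1, P {ω | U ω ≤ s} = ENNReal.ofReal s) :
    P.map (fun ω => nonnegQuantile (cdf μ) (U ω)) = μ := by
  obtain ⟨x, hx⟩ := hμ.exists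
  have hK : 0 ≤ K := hx.1.trans hx.2
  have hGK := one_le_cdf_of_ae_le (hμ.mono fun _ h => h.2)
  have hmeas : Measurable fun ω => nonnegQuantile (cdf μ) (U ω) :=
    (monotone_nonnegQuantile hK hGK).measurable.comp hU
  refine Measure.ext_of_Iic _ _ fun t => ?_
  rw [Measure.map_apply hmeas measurableSet_Iic]
  rcases le_or_gt 0 t with ht | ht
  · have hset : (fun ω => nonnegQuantile (cdf μ) (U ω)) ⁻¹' Iic t = {ω | U ω ≤ cdf μ t} :=
      ext fun ω => nonnegQuantile_le_iff hK hGK (hU1 ω) ht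
    rw [hset, hUunif _ ⟨cdf_nonneg μ t, cdf_le_one μ t⟩, ofReal_cdf]
  · have hempty : (fun ω => nonnegQuantile (cdf μ) (U ω)) ⁻¹' Iic t = ∅ :=
      eq_empty_of_forall_notMem fun ω hω =>
        (nonnegQuantile_mem_Icc hK hGK (U ω)).1.not_gt (lt_of_le_of_lt hω ht)
    rw [hempty, measure_empty, eq_comm]
    refine measure_mono_null ?_ (ae_iff.mp hμ)
    exact fun x (hxt : x ≤ t) (hmem : x ∈ Icc 0 K) => (hmem.1.trans hxt).not_gt ht

theorem exists_comap_measurable_rearrangement {Ω : Type*} [MeasurableSpace Ω] {P : Measure Ω}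
    [IsProbabilityMeasure P] {φ : Ω → ℝ} (hφ : Measurable φ) (hφ0 : 0 ≤ᵐ[P] φ)
    (hφint : Integrable φ P) (hF : Continuous (cdf (P.map φ))) {K : ℝ} {W : Ω → ℝ}
    (hW : Measurable W) (hWb : ∀ᵐ ω ∂P, W ω ∈ Icc 0 K) :
    ∃ Wh : Ω → ℝ, Measurable[MeasurableSpace.comap φ Real.measurableSpace] Wh ∧
      (∀ ω, Wh ω ∈ Icc 0 K) ∧ P.map Wh = P.map W ∧
      ∫ ω, φ ω * W ω ∂P ≤ ∫ ω, φ ω * Wh ω ∂P := by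
  have := Measure.isProbabilityMeasure_map (μ := P) hW.aemeasurable
  have := Measure.isProbabilityMeasure_map (μ := P) hφ.aemeasurable
  have hWlaw : ∀ᵐ x ∂P.map W, x ∈ Icc 0 K :=
    (ae_map_iff hW.aemeasurable measurableSet_Icc).mpr hWb
  obtain ⟨x, hx⟩ := hWb.exists
  have hK : 0 ≤ K := hx.1.trans hx.2
  have hGK := one_le_cdf_of_ae_le (hWlaw.mono fun _ h => h.2)
  have hmono : Monotone fun x => nonnegQuantile (cdf (P.map W)) (cdf (P.map φ) x) :=
    (monotone_nonnegQuantile hK hGK).comp (cdf _).mono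
  set Wh := fun ω => nonnegQuantile (cdf (P.map W)) (cdf (P.map φ) (φ ω))
  have hWh : Measurable Wh := hmono.measurable.comp hφ
  have hWhb : ∀ ω, Wh ω ∈ Icc 0 K := fun ω => nonnegQuantile_mem_Icc hK hGK _
  have hmap : P.map Wh = P.map W := by
    refine map_nonnegQuantile_cdf_comp_of_uniform hWlaw ((cdf _).mono.measurable.comp hφ)
      (fun ω => cdf_le_one _ _) fun s hs => ?_
    rw [← measure_cdf_le_eq_ofReal hF hs,
      Measure.map_apply hφ (measurableSet_le (cdf _).mono.measurable measurable_const)]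
    rfl
  have hint : Integrable (fun ω => φ ω * Wh ω) P :=
    hφint.mul_bdd hWh.aestronglyMeasurable <| ae_of_all _ fun ω =>
      (Real.norm_of_nonneg (hWhb ω).1).trans_le (hWhb ω).2
  refine ⟨Wh, hmono.measurable.comp (comap_measurable φ), hWhb, hmap,
    integral_mul_le_integral_mul_of_comonotone hφ hφ0 hW hWh (hWb.mono fun _ h => h.1)
      (ae_of_all _ fun ω => (hWhb ω).1) hmap.symm hint fun ω ω' h => ?_⟩
  exact not_lt.mp fun h' => h.not_ge (hmono h'.le)

theorem ae_eq_of_map_eq_of_map_convexComb_eq {Ω : Type*} [MeasurableSpace Ω] {P : Measure Ω}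
    {X Y : Ω → ℝ} (hX : MemLp X 2 P) (hY : MemLp Y 2 P) {t : ℝ} (ht0 : 0 < t) (ht1 : t < 1)
    (hXY : P.map X = P.map Y) (hZX : P.map (fun ω => t * X ω + (1 - t) * Y ω) = P.map X) :
    X =ᵐ[P] Y := by
  set Z := fun ω => t * X ω + (1 - t) * Y ω
  have hZ : MemLp Z 2 P := (hX.const_mul t).add (hY.const_mul (1 - t))
  have hsecond : ∀ V : Ω → ℝ, MemLp V 2 P → ∫ ω, V ω ^ 2 ∂P = ∫ x, x ^ 2 ∂P.map V := fun V hV =>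
    (integral_map hV.aestronglyMeasurable.aemeasurable
      (continuous_pow 2).aestronglyMeasurable).symm
  have hint : Integrable (fun ω => t * (1 - t) * (X ω - Y ω) ^ 2) P :=
    (hX.sub hY).integrable_sq.const_mul _
  -- `t X² + (1 - t) Y² - Z² = t (1 - t) (X - Y)²` while `X`, `Y`, `Z` have equal second moments
  have hzero : ∫ ω, t * (1 - t) * (X ω - Y ω) ^ 2 ∂P = 0 := by
    have h : ∀ ω, t * (1 - t) * (X ω - Y ω) ^ 2 = t * X ω ^ 2 + (1 - t) * Y ω ^ 2 - Z ω ^ 2 :=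
      fun ω => by simp only [Z]; ring
    have hX2 : Integrable (fun ω => t * X ω ^ 2) P := hX.integrable_sq.const_mul t
    have hY2 : Integrable (fun ω => (1 - t) * Y ω ^ 2) P := hY.integrable_sq.const_mul _
    simp_rw [h]
    rw [integral_sub (f := fun ω => t * X ω ^ 2 + (1 - t) * Y ω ^ 2) (hX2.add hY2)
        hZ.integrable_sq, integral_add hX2 hY2, integral_const_mul, integral_const_mul,
      hsecond X hX, hsecond Y hY, hsecond Z hZ, hZX, hXY]
    ring
  filter_upwards [(integral_eq_zero_iff_of_nonneg (fun ω => by positivity) hint).mp hzero]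
    with ω h
  simpa [ht0.ne', (sub_pos.2 ht1).ne', sub_eq_zero] using h

section NeymanPearson

variable {Ω : Type*} [MeasurableSpace Ω] {P : Measure Ω} {ρ : (Ω → ℝ) → ℝ} {φ : Ω → ℝ} {K v : ℝ}
  {X Y : Ω → ℝ}

theorem Feasible.convexComb (hφint : Integrable φ P) (hX : Feasible P φ K v X)
    (hY : Feasible P φ K v Y) {t : ℝ} (ht0 : 0 ≤ t) (ht1 : t ≤ 1) :
    Feasible P φ K v fun ω => t * X ω + (1 - t) * Y ω := by
  refine ⟨(hX.1.const_mul t).add (hY.1.const_mul (1 - t)), ?_, ?_⟩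
  · filter_upwards [hX.2.1, hY.2.1] with ω hXω hYω
    exact convex_Icc 0 K hXω hYω ht0 (sub_nonneg.2 ht1) (by ring)
  · have hsplit : ∫ ω, φ ω * (t * X ω + (1 - t) * Y ω) ∂P =
        t * ∫ ω, φ ω * X ω ∂P + (1 - t) * ∫ ω, φ ω * Y ω ∂P := by
      have hφX : Integrable (fun ω => φ ω * X ω) P := hφint.mul_of_top_left hX.1
      have hφY : Integrable (fun ω => φ ω * Y ω) P := hφint.mul_of_top_left hY.1
      rw [← integral_const_mul, ← integral_const_mul,
        ← integral_add (hφX.const_mul t) (hφY.const_mul (1 - t))]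
      congr 1 with ω
      ring
    rw [hsplit]
    nlinarith [hX.2.2, hY.2.2]

theorem IsNPSolution.convexComb (hconv : RConvex P ρ) (hφint : Integrable φ P)
    (hX : IsNPSolution P ρ φ K v X) (hY : IsNPSolution P ρ φ K v Y) {t : ℝ} (ht0 : 0 ≤ t)
    (ht1 : t ≤ 1) : IsNPSolution P ρ φ K v fun ω => t * X ω + (1 - t) * Y ω := by
  refine ⟨hX.1.convexComb hφint hY.1 ht0 ht1, fun W hW => ?_⟩
  have hXY : ρ (fun ω => -X ω) = ρ (fun ω => -Y ω) := le_antisymm (hX.2 _ hY.1) (hY.2 _ hX.1)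
  calc ρ (fun ω => -(t * X ω + (1 - t) * Y ω))
      = ρ (fun ω => t * -X ω + (1 - t) * -Y ω) := by congr 1 with ω; ring
    _ ≤ t * ρ (fun ω => -X ω) + (1 - t) * ρ (fun ω => -Y ω) :=
        hconv _ _ hX.1.1.neg hY.1.1.neg t ht0 ht1
    _ = ρ (fun ω => -X ω) := by rw [← hXY]; ring
    _ ≤ ρ (fun ω => -W ω) := hX.2 W hW

theorem IsNPSolution.of_map_eq (hlaw : RLawInvariant P ρ) (hX : IsNPSolution P ρ φ K v X)
    (hY : Feasible P φ K v Y) (hYX : P.map Y = P.map X) : IsNPSolution P ρ φ K v Y := by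
  have hneg : ∀ V : Ω → ℝ, MemLp V ⊤ P → P.map (fun ω => -V ω) = (P.map V).map Neg.neg :=
    fun V hV => (AEMeasurable.map_map_of_aemeasurable measurable_neg.aemeasurable
      hV.aestronglyMeasurable.aemeasurable).symm
  have hρ : ρ (fun ω => -Y ω) = ρ (fun ω => -X ω) :=
    hlaw _ _ hY.1.neg hX.1.1.neg <| by rw [hneg Y hY.1, hneg X hX.1.1, hYX]
  exact ⟨hY, fun W hW => hρ ▸ hX.2 W hW⟩

theorem IsNPSolution.exists_comap_measurable_map_eq [IsProbabilityMeasure P]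
    (hlaw : RLawInvariant P ρ) (hφ : Measurable φ) (hφ0 : 0 ≤ᵐ[P] φ) (hφint : Integrable φ P)
    (hF : Continuous (cdf (P.map φ))) (hX : IsNPSolution P ρ φ K v X) :
    ∃ Xh : Ω → ℝ, Measurable[MeasurableSpace.comap φ Real.measurableSpace] Xh ∧
      IsNPSolution P ρ φ K v Xh ∧ P.map Xh = P.map X := by
  have hXm := hX.1.1.aestronglyMeasurable.aemeasurable
  obtain ⟨Xh, hXhm, hXhb, hmap, hint⟩ := exists_comap_measurable_rearrangement hφ hφ0 hφint hF
    hXm.measurable_mk <| by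
      filter_upwards [hX.1.2.1, hXm.ae_eq_mk] with ω h h'
      rwa [← h']
  have hmapX : P.map Xh = P.map X := hmap.trans (Measure.map_congr hXm.ae_eq_mk).symm
  have hfeas : Feasible P φ K v Xh := by
    refine ⟨memLp_top_of_bound (hXhm.mono hφ.comap_le le_rfl).aestronglyMeasurable K <|
      ae_of_all _ fun ω => (Real.norm_of_nonneg (hXhb ω).1).trans_le (hXhb ω).2,
      ae_of_all _ hXhb, ?_⟩
    calc v ≤ ∫ ω, φ ω * X ω ∂P := hX.1.2.2
      _ = ∫ ω, φ ω * hXm.mk X ω ∂P :=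
          integral_congr_ae <| hXm.ae_eq_mk.mono fun ω h => congrArg (φ ω * ·) h
      _ ≤ ∫ ω, φ ω * Xh ω ∂P := hint
  exact ⟨Xh, hXhm, hX.of_map_eq hlaw hfeas hmapX, hmapX⟩

end NeymanPearson

theorem uniqueness_from_sigma_phi_uniqueness_general
    {Ω : Type*} [MeasurableSpace Ω] (P : Measure Ω) [IsProbabilityMeasure P]
    (φ : Ω → ℝ) (hφm : Measurable φ) (hφint : Integrable φ P)
    (hφpos : ∀ᵐ ω ∂P, 0 < φ ω)
    (K v : ℝ)
    (ρ : (Ω → ℝ) → ℝ) (hconv : RConvex P ρ)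
    (hlaw : RLawInvariant P ρ)
    (hFcont : Continuous fun x : ℝ => (P {ω | φ ω ≤ x}).toReal)
    (huniq : ∀ X Y : Ω → ℝ,
      @Measurable Ω ℝ (MeasurableSpace.comap φ Real.measurableSpace) _ X →
      @Measurable Ω ℝ (MeasurableSpace.comap φ Real.measurableSpace) _ Y →
      IsNPSolution P ρ φ K v X → IsNPSolution P ρ φ K v Y → X =ᵐ[P] Y) :
    ∀ X Y : Ω → ℝ, IsNPSolution P ρ φ K v X → IsNPSolution P ρ φ K v Y → X =ᵐ[P] Y := by
  intro X Y hX hY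
  have hF : Continuous (cdf (P.map φ)) := by
    have := Measure.isProbabilityMeasure_map (μ := P) hφm.aemeasurable
    convert hFcont using 2 with x
    rw [cdf_eq_real, map_measureReal_apply hφm measurableSet_Iic]
    rfl
  have hsol {W : Ω → ℝ} (hW : IsNPSolution P ρ φ K v W) :=
    hW.exists_comap_measurable_map_eq hlaw hφm (hφpos.mono fun _ h => h.le) hφint hF
  have hZ := hX.convexComb hconv hφint hY (t := 2⁻¹) (by norm_num) (by norm_num)
  obtain ⟨Xh, hXhm, hXh, hXmap⟩ := hsol hX
  obtain ⟨Yh, hYhm, hYh, hYmap⟩ := hsol hY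
  obtain ⟨Zh, hZhm, hZh, hZmap⟩ := hsol hZ
  have hXY : P.map X = P.map Y := by
    rw [← hXmap, ← hYmap, Measure.map_congr (huniq _ _ hXhm hYhm hXh hYh)]
  have hZX : P.map (fun ω => 2⁻¹ * X ω + (1 - 2⁻¹) * Y ω) = P.map X := by
    rw [← hXmap, ← hZmap, Measure.map_congr (huniq _ _ hZhm hXhm hZh hXh)]
  exact ae_eq_of_map_eq_of_map_convexComb_eq (hX.1.1.mono_exponent le_top)
    (hY.1.1.mono_exponent le_top) (by norm_num) (by norm_num) hXY hZX

/-- Proposition 2.7: if `φ` has a continuous distribution function and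
the Neyman–Pearson problem has at most one `σ(φ)`-measurable solution up to `P`-null sets,
then it has at most one solution up to `P`-null sets among all `𝓕`-measurable claims. -/
theorem uniqueness_from_sigma_phi_uniqueness
    {Ω : Type*} [MeasurableSpace Ω] (P : Measure Ω) [IsProbabilityMeasure P]
    (hP : Atomless P)
    (φ : Ω → ℝ) (hφm : Measurable φ) (hφint : Integrable φ P)
    (hφpos : ∀ᵐ ω ∂P, 0 < φ ω) (hφ1 : ∫ ω, φ ω ∂P = 1)
    (K v : ℝ) (hK : 0 < K) (hv : v ∈ Icc 0 K)
    (ρ : (Ω → ℝ) → ℝ) (hmono : RMono P ρ) (hconv : RConvex P ρ)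
    (hlaw : RLawInvariant P ρ) (hcont : RContFromAbove P ρ)
    (hconst : RConstIncreasing ρ K)
    (hFcont : Continuous fun x : ℝ => (P {ω | φ ω ≤ x}).toReal)
    (huniq : ∀ X Y : Ω → ℝ,
      @Measurable Ω ℝ (MeasurableSpace.comap φ Real.measurableSpace) _ X →
      @Measurable Ω ℝ (MeasurableSpace.comap φ Real.measurableSpace) _ Y →
      IsNPSolution P ρ φ K v X → IsNPSolution P ρ φ K v Y → X =ᵐ[P] Y) :
    ∀ X Y : Ω → ℝ, IsNPSolution P ρ φ K v X → IsNPSolution P ρ φ K v Y → X =ᵐ[P] Y :=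
  uniqueness_from_sigma_phi_uniqueness_general P φ hφm hφint hφpos K v ρ hconv hlaw hFcont huniq
end

section
/- For 0 ≤ v < v′ ≤ K, let X*(v) and X*(v′) denote the unique solutions of the Neyman–Pearson problem for ρ_λ at levels v and v′ respectively. Then X*(v) ≤ X*(v′) P-almost surely; that is, the solutions are pointwise increasing in the capital level v. -/
open MeasureTheory Filter Topology Set

/-- `ρ_λ(−X) = max_{Q ∈ 𝒬_λ} E_Q[ℓ(X)]`, where `𝒬_λ` is the set of probability measures
`Q ≪ P` with `dQ/dP ≤ 1/λ` P-a.s.  (The value `rhoLam P λ ℓ X` represents `ρ_λ(−X)`.) -/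
noncomputable def rhoLam {Ω : Type*} [MeasurableSpace Ω] (P : Measure Ω) (lam : ℝ)
    (ℓ : ℝ → ℝ) (X : Ω → ℝ) : ℝ :=
  sSup {r : ℝ | ∃ Q : Measure Ω, IsProbabilityMeasure Q ∧ Q ≪ P ∧
    (∀ᵐ ω ∂P, Q.rnDeriv P ω ≤ ENNReal.ofReal (1 / lam)) ∧ r = ∫ ω, ℓ (X ω) ∂Q}

/-- A solution of the Neyman–Pearson problem for `ρ_λ` at level `v`:
minimize `ρ_λ(−X)` over `X ∈ L^∞` with `0 ≤ X ≤ K` P-a.s. and `E[φX] ≥ v`. -/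
def IsLamSolution {Ω : Type*} [MeasurableSpace Ω] (P : Measure Ω) (lam : ℝ) (ℓ : ℝ → ℝ)
    (φ : Ω → ℝ) (K v : ℝ) (X : Ω → ℝ) : Prop :=
  Feasible P φ K v X ∧
    ∀ Y : Ω → ℝ, Feasible P φ K v Y → rhoLam P lam ℓ X ≤ rhoLam P lam ℓ Y

/-- The characterizing properties of the extension `I : ℝ → [−∞,∞]` of the inverse of `ℓ′`:
`I = (ℓ′)⁻¹` on the range `(a,b)` of `ℓ′`, `I = +∞` above `b` and `I = −∞` below `a`. -/
def IsExtendedInverse (ℓ : ℝ → ℝ) (I : ℝ → EReal) : Prop :=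
  (∀ x : ℝ, I (deriv ℓ x) = (x : EReal)) ∧
  (∀ z : ℝ, (∀ x : ℝ, deriv ℓ x < z) → I z = ⊤) ∧
  (∀ z : ℝ, (∀ x : ℝ, z < deriv ℓ x) → I z = ⊥)

/-- The representation `X* = β + (I(c(φ ∨ y)) − I(cy)) ∧ (K − β)` P-a.s.,
with `β ≥ 0`, `y ≥ q` and `c = ℓ′(β)/y`. -/
def LamForm {Ω : Type*} [MeasurableSpace Ω] (P : Measure Ω) (φ : Ω → ℝ) (ℓ : ℝ → ℝ)
    (I : ℝ → EReal) (K q : ℝ) (X : Ω → ℝ) (β y c : ℝ) : Prop :=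
  0 ≤ β ∧ q ≤ y ∧ c = deriv ℓ β / y ∧
    ∀ᵐ ω ∂P, X ω =
      β + (min (I (c * max (φ ω) y) - I (c * y)) (((K - β : ℝ) : EReal))).toReal

/-! Write `A = X ⊓ X'` and `B = X ⊔ X'`. By the Rockafellar–Uryasev representation
`ρ_λ(-W) = min_t (t + λ⁻¹ E[(ℓ(W) - t)⁺])`, `ρ_λ` is convex and submodular:
`ρ_λ(-A) + ρ_λ(-B) ≤ ρ_λ(-X) + ρ_λ(-X')`. Budgets bind at solutions, so the mixtures
`Y = (1 - μ) A + μ B` and `Y' = (1 - μ) B + μ A` with a suitable `μ ≤ 1/2` are feasible at levels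
`v` and `v'`, satisfy `Y ≤ Y'`, and have total risk at most that of `X, X'`; optimality makes them
solutions, and uniqueness gives `X = Y ≤ Y' = X'`.

Uniqueness: a solution `W` satisfies `ℓ(W) ≥ t` a.e. for its Rockafellar–Uryasev threshold `t`
(otherwise `W ⊔ ℓ⁻¹(t)` would be as good with a larger budget). At the midpoint of two solutions
the convexity inequality is an equality, which by strict convexity of `ℓ` forces both to sit at
their thresholds wherever they differ; they are then ordered, and equal budgets make them agree. -/

section RockafellarUryasev

variable {Ω : Type*} [MeasurableSpace Ω] {P : Measure Ω} [IsProbabilityMeasure P]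
  {lam K : ℝ} {ℓ : ℝ → ℝ} {W : Ω → ℝ}

-- `rhoLam P lam ℓ W = min_t ruObjective P lam (ℓ ∘ W) t`, the minimum being attained at an upper
-- `λ`-quantile of `ℓ ∘ W`.
noncomputable def ruObjective (P : Measure Ω) (lam : ℝ) (Z : Ω → ℝ) (t : ℝ) : ℝ :=
  t + lam⁻¹ * ∫ ω, max (Z ω - t) 0 ∂P

def riskValues (P : Measure Ω) (lam : ℝ) (ℓ : ℝ → ℝ) (W : Ω → ℝ) : Set ℝ :=
  {r : ℝ | ∃ Q : Measure Ω, IsProbabilityMeasure Q ∧ Q ≪ P ∧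
    (∀ᵐ ω ∂P, Q.rnDeriv P ω ≤ ENNReal.ofReal (1 / lam)) ∧ r = ∫ ω, ℓ (W ω) ∂Q}

lemma MeasureTheory.Integrable.posPart_sub_const {Z : Ω → ℝ} (hZ : Integrable Z P) (r : ℝ) :
    Integrable (fun ω => max (Z ω - r) 0) P :=
  (hZ.sub (integrable_const r)).pos_part

lemma integral_mul_le_ruObjective {q Z : Ω → ℝ} (hq : AEStronglyMeasurable q P)
    (hq_mem : ∀ᵐ ω ∂P, q ω ∈ Icc 0 lam⁻¹) (hq_one : ∫ ω, q ω ∂P = 1) (hZ : Integrable Z P)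
    (t : ℝ) : ∫ ω, q ω * Z ω ∂P ≤ ruObjective P lam Z t := by
  have hq_int : Integrable q P := .of_mem_Icc 0 lam⁻¹ hq.aemeasurable hq_mem
  have hpos := (hZ.posPart_sub_const t).const_mul lam⁻¹
  calc ∫ ω, q ω * Z ω ∂P ≤ ∫ ω, t * q ω + lam⁻¹ * max (Z ω - t) 0 ∂P := by
        refine integral_mono_ae (hZ.bdd_mul hq (c := lam⁻¹) ?_) ((hq_int.const_mul t).add hpos) ?_
        · filter_upwards [hq_mem] with ω h
          rw [Real.norm_eq_abs, abs_of_nonneg h.1]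
          exact h.2
        · filter_upwards [hq_mem] with ω ⟨h₀, h₁⟩
          rcases le_total (Z ω - t) 0 with hz | hz
          · rw [max_eq_right hz]; nlinarith
          · rw [max_eq_left hz]; nlinarith
    _ = ruObjective P lam Z t := by
        rw [integral_add (hq_int.const_mul t) hpos, integral_const_mul, integral_const_mul, hq_one,
          mul_one, ruObjective]

lemma ruObjective_mem_upperBounds_riskValues (hlam : 0 < lam)
    (hZ : Integrable (fun ω => ℓ (W ω)) P) (t : ℝ) :
    ruObjective P lam (fun ω => ℓ (W ω)) t ∈ upperBounds (riskValues P lam ℓ W) := by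
  rintro r ⟨Q, hQ, hQP, hdens, rfl⟩
  rw [← integral_rnDeriv_smul hQP]
  refine integral_mul_le_ruObjective
    (Measure.measurable_rnDeriv Q P).ennreal_toReal.aestronglyMeasurable ?_ ?_ hZ t
  · filter_upwards [hdens] with ω h
    exact ⟨ENNReal.toReal_nonneg, by simpa using ENNReal.toReal_le_of_le_ofReal (by positivity) h⟩
  · rw [Measure.integral_toReal_rnDeriv hQP, probReal_univ]

lemma riskValues_nonempty (hlam : lam ∈ Ioc 0 1) : (riskValues P lam ℓ W).Nonempty := by
  refine ⟨_, P, inferInstance, .rfl, ?_, rfl⟩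
  filter_upwards [Measure.rnDeriv_self P] with ω h
  rw [h, ← ENNReal.ofReal_one]
  exact ENNReal.ofReal_le_ofReal ((one_le_div hlam.1).2 hlam.2)

lemma rhoLam_le_ruObjective (hlam : lam ∈ Ioc 0 1) (hZ : Integrable (fun ω => ℓ (W ω)) P)
    (t : ℝ) : rhoLam P lam ℓ W ≤ ruObjective P lam (fun ω => ℓ (W ω)) t :=
  csSup_le (riskValues_nonempty hlam) (ruObjective_mem_upperBounds_riskValues hlam.1 hZ t)

lemma integral_mul_le_rhoLam (hlam : lam ∈ Ioc 0 1) {q : Ω → ℝ} (hq : Measurable q)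
    (hq_mem : ∀ ω, q ω ∈ Icc 0 lam⁻¹) (hq_one : ∫ ω, q ω ∂P = 1)
    (hZ : Integrable (fun ω => ℓ (W ω)) P) : ∫ ω, q ω * ℓ (W ω) ∂P ≤ rhoLam P lam ℓ W := by
  refine le_csSup ⟨_, ruObjective_mem_upperBounds_riskValues hlam.1 hZ 0⟩ ?_
  have hq_int : Integrable q P := .of_mem_Icc 0 lam⁻¹ hq.aemeasurable (ae_of_all _ hq_mem)
  refine ⟨P.withDensity fun ω => ENNReal.ofReal (q ω), ⟨?_⟩,
    withDensity_absolutelyContinuous _ _, ?_, ?_⟩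
  · rw [withDensity_apply _ .univ, setLIntegral_univ,
      ← ofReal_integral_eq_lintegral_ofReal hq_int (ae_of_all _ fun ω => (hq_mem ω).1), hq_one,
      ENNReal.ofReal_one]
  · filter_upwards [Measure.rnDeriv_withDensity P hq.ennreal_ofReal] with ω h
    rw [h, one_div]
    exact ENNReal.ofReal_le_ofReal (hq_mem ω).2
  · rw [integral_withDensity_eq_integral_toReal_smul hq.ennreal_ofReal
      (ae_of_all _ fun _ => ENNReal.ofReal_lt_top)]
    simp only [ENNReal.toReal_ofReal (hq_mem _).1, smul_eq_mul]

lemma integral_le_rhoLam (hlam : lam ∈ Ioc 0 1) (hZ : Integrable (fun ω => ℓ (W ω)) P) :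
    ∫ ω, ℓ (W ω) ∂P ≤ rhoLam P lam ℓ W := by
  simpa using integral_mul_le_rhoLam hlam measurable_const
    (fun _ => ⟨zero_le_one, (one_le_inv₀ hlam.1).2 hlam.2⟩) (by simp) hZ

lemma rhoLam_const_le (hlam : lam ∈ Ioc 0 1) (c : ℝ) : rhoLam P lam ℓ (fun _ => c) ≤ ℓ c := by
  simpa [ruObjective] using rhoLam_le_ruObjective hlam (integrable_const (ℓ c)) (ℓ c)

lemma exists_quantile {Z : Ω → ℝ} (hZ : Measurable Z) {a b : ℝ}
    (hZb : ∀ᵐ ω ∂P, Z ω ∈ Icc a b) (hlam : lam < 1) :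
    ∃ t ∈ Icc a b, P {ω | t < Z ω} ≤ ENNReal.ofReal lam ∧
      ENNReal.ofReal lam ≤ P {ω | t ≤ Z ω} := by
  set T := {s | P {ω | s < Z ω} ≤ ENNReal.ofReal lam}
  have hbT : b ∈ T := by
    have : P {ω | b < Z ω} = 0 := by
      simpa using ae_iff.1 (hZb.mono fun ω h => h.2.not_gt)
    simp [T, this]
  have hT_ge : ∀ s ∈ T, a ≤ s := by
    intro s hs
    by_contra! hsa
    have : P {ω | s < Z ω} = 1 := by
      rw [← prob_compl_eq_zero_iff (measurableSet_lt measurable_const hZ), compl_ofPred]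
      simpa using ae_iff.1 (hZb.mono fun ω h => hsa.trans_le h.1)
    exact (ENNReal.ofReal_lt_one.2 hlam).not_ge (this ▸ hs)
  refine ⟨sInf T, ⟨le_csInf ⟨b, hbT⟩ hT_ge, csInf_le ⟨a, hT_ge⟩ hbT⟩, ?_, ?_⟩
  · obtain ⟨u, hu_anti, hu_gt, hu_lim⟩ := exists_seq_strictAnti_tendsto (sInf T)
    have hU : {ω | sInf T < Z ω} = ⋃ n, {ω | u n < Z ω} := by
      ext ω
      simp only [mem_ofPred_eq, mem_iUnion]
      exact ⟨fun h => (hu_lim.eventually (gt_mem_nhds h)).exists,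
        fun ⟨n, hn⟩ => (hu_gt n).trans hn⟩
    rw [hU, Monotone.measure_iUnion (s := fun n => {ω | u n < Z ω})
      fun m n hmn ω hω => (hu_anti.antitone hmn).trans_lt hω]
    refine iSup_le fun n => ?_
    obtain ⟨s, hsT, hsu⟩ := exists_lt_of_csInf_lt ⟨b, hbT⟩ (hu_gt n)
    exact (measure_mono fun ω hω => hsu.trans hω).trans hsT
  · obtain ⟨u, hu_mono, hu_lt, hu_lim⟩ := exists_seq_strictMono_tendsto (sInf T)
    have hI : {ω | sInf T ≤ Z ω} = ⋂ n, {ω | u n < Z ω} := by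
      ext ω
      simp only [mem_ofPred_eq, mem_iInter]
      exact ⟨fun h n => (hu_lt n).trans_le h, fun h => le_of_tendsto' hu_lim fun n => (h n).le⟩
    rw [hI, Antitone.measure_iInter (s := fun n => {ω | u n < Z ω})
      (fun m n hmn ω hω => (hu_mono.monotone hmn).trans_lt hω)
      (fun _ => (measurableSet_lt measurable_const hZ).nullMeasurableSet) ⟨0, measure_ne_top _ _⟩]
    refine le_iInf fun n => ?_
    by_contra! h
    exact (hu_lt n).not_ge (csInf_le ⟨a, hT_ge⟩ h.le)

lemma exists_density_of_quantile {Z : Ω → ℝ} (hZ : Measurable Z) (hlam : 0 < lam) {t : ℝ}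
    (ht_gt : P {ω | t < Z ω} ≤ ENNReal.ofReal lam)
    (ht_ge : ENNReal.ofReal lam ≤ P {ω | t ≤ Z ω}) :
    ∃ q : Ω → ℝ, Measurable q ∧ (∀ ω, q ω ∈ Icc 0 lam⁻¹) ∧ ∫ ω, q ω ∂P = 1 ∧
      ∀ ω, q ω * Z ω = t * q ω + lam⁻¹ * max (Z ω - t) 0 := by
  have hgt : MeasurableSet {ω | t < Z ω} := measurableSet_lt measurable_const hZ
  have hge : MeasurableSet {ω | t ≤ Z ω} := measurableSet_le measurable_const hZ
  obtain ⟨θ, ⟨hθ₀, hθ₁⟩, hθlam⟩ : ∃ θ ∈ Icc (0 : ℝ) 1,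
      (1 - θ) * P.real {ω | t < Z ω} + θ * P.real {ω | t ≤ Z ω} = lam :=
    intermediate_value_Icc zero_le_one (by fun_prop) (by
      simpa using ⟨ENNReal.toReal_le_of_le_ofReal hlam.le ht_gt,
        (ENNReal.ofReal_le_iff_le_toReal (measure_ne_top _ _)).1 ht_ge⟩)
  refine ⟨fun ω => lam⁻¹ * ((1 - θ) * {ω | t < Z ω}.indicator 1 ω +
    θ * {ω | t ≤ Z ω}.indicator 1 ω), ?_, fun ω => ?_, ?_, fun ω => ?_⟩
  · exact measurable_const.mul ((measurable_const.mul (measurable_const.indicator hgt)).add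
      (measurable_const.mul (measurable_const.indicator hge)))
  · have hind (s : Set Ω) : s.indicator (1 : Ω → ℝ) ω ∈ Icc 0 1 := by
      by_cases h : ω ∈ s <;> simp [h]
    obtain ⟨h₁, h₁'⟩ := hind {ω | t < Z ω}
    obtain ⟨h₂, h₂'⟩ := hind {ω | t ≤ Z ω}
    exact ⟨mul_nonneg (inv_nonneg.2 hlam.le) (by nlinarith),
      mul_le_of_le_one_right (inv_nonneg.2 hlam.le) (by nlinarith)⟩
  · rw [integral_const_mul, integral_add ((integrable_const _).indicator hgt |>.const_mul _)
      ((integrable_const _).indicator hge |>.const_mul _), integral_const_mul, integral_const_mul,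
      integral_indicator_one hgt, integral_indicator_one hge, hθlam, inv_mul_cancel₀ hlam.ne']
  · rcases lt_trichotomy (Z ω) t with h | h | h
    · simp [h.not_ge, h.not_gt, h.le]
    · simp [h]; ring
    · simp [h, h.le]; ring

lemma exists_rhoLam_eq_ruObjective (hlam : lam ∈ Ioo 0 1) {a b : ℝ}
    (hZ : AEMeasurable (fun ω => ℓ (W ω)) P) (hZb : ∀ᵐ ω ∂P, ℓ (W ω) ∈ Icc a b) :
    ∃ t ∈ Icc a b, rhoLam P lam ℓ W = ruObjective P lam (fun ω => ℓ (W ω)) t := by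
  have hZ_int : Integrable (fun ω => ℓ (W ω)) P := .of_mem_Icc a b hZ hZb
  have hZ_mk := hZ.ae_eq_mk
  obtain ⟨t, ht, ht_gt, ht_ge⟩ := exists_quantile hZ.measurable_mk
    (by filter_upwards [hZb, hZ_mk] with ω h e; rwa [← e]) hlam.2
  obtain ⟨q, hq, hq_mem, hq_one, hq_eq⟩ :=
    exists_density_of_quantile hZ.measurable_mk hlam.1 ht_gt ht_ge
  have hq_int : Integrable q P := .of_mem_Icc 0 lam⁻¹ hq.aemeasurable (ae_of_all _ hq_mem)
  have hqZ : (fun ω => q ω * ℓ (W ω)) =ᵐ[P]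
      fun ω => t * q ω + lam⁻¹ * max (ℓ (W ω) - t) 0 := by
    filter_upwards [hZ_mk] with ω e
    rw [e]
    exact hq_eq ω
  refine ⟨t, ht, le_antisymm (rhoLam_le_ruObjective ⟨hlam.1, hlam.2.le⟩ hZ_int t) ?_⟩
  calc ruObjective P lam (fun ω => ℓ (W ω)) t = ∫ ω, q ω * ℓ (W ω) ∂P := by
        rw [integral_congr_ae hqZ, integral_add (hq_int.const_mul t)
          ((hZ_int.posPart_sub_const t).const_mul _), integral_const_mul, integral_const_mul,
          hq_one, mul_one, ruObjective]
    _ ≤ rhoLam P lam ℓ W := integral_mul_le_rhoLam ⟨hlam.1, hlam.2.le⟩ hq hq_mem hq_one hZ_int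

lemma posPart_sub_combo_le {z z₁ z₂ t₁ t₂ μ : ℝ} (hμ : μ ∈ Icc 0 1)
    (h : z ≤ (1 - μ) * z₁ + μ * z₂) :
    max (z - ((1 - μ) * t₁ + μ * t₂)) 0 ≤ (1 - μ) * max (z₁ - t₁) 0 + μ * max (z₂ - t₂) 0 := by
  obtain ⟨hμ₀, hμ₁⟩ := hμ
  have h₁ := le_max_left (z₁ - t₁) 0
  have h₂ := le_max_left (z₂ - t₂) 0
  refine max_le ?_ (by positivity)
  nlinarith [mul_le_mul_of_nonneg_left h₁ (sub_nonneg.2 hμ₁), mul_le_mul_of_nonneg_left h₂ hμ₀]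

lemma posPart_min_add_posPart_max_le {a b s t : ℝ} (hst : s ≤ t) :
    max (min a b - s) 0 + max (max a b - t) 0 ≤ max (a - s) 0 + max (b - t) 0 := by
  rcases le_total a b with h | h
  · simp [h]
  · simp only [min_eq_right h, max_eq_left h, max_def]
    split_ifs <;> linarith

lemma ruObjective_le_combo (hlam : 0 < lam) {Z Z₁ Z₂ : Ω → ℝ} (hZ : Integrable Z P)
    (hZ₁ : Integrable Z₁ P) (hZ₂ : Integrable Z₂ P) {μ : ℝ} (hμ : μ ∈ Icc 0 1)
    (hle : ∀ᵐ ω ∂P, Z ω ≤ (1 - μ) * Z₁ ω + μ * Z₂ ω) (t₁ t₂ : ℝ) :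
    ruObjective P lam Z ((1 - μ) * t₁ + μ * t₂) ≤
      (1 - μ) * ruObjective P lam Z₁ t₁ + μ * ruObjective P lam Z₂ t₂ := by
  have hI₁ := (hZ₁.posPart_sub_const t₁).const_mul (1 - μ)
  have hI₂ := (hZ₂.posPart_sub_const t₂).const_mul μ
  have key : ∫ ω, max (Z ω - ((1 - μ) * t₁ + μ * t₂)) 0 ∂P ≤
      (1 - μ) * ∫ ω, max (Z₁ ω - t₁) 0 ∂P + μ * ∫ ω, max (Z₂ ω - t₂) 0 ∂P := by
    rw [← integral_const_mul, ← integral_const_mul, ← integral_add hI₁ hI₂]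
    refine integral_mono_ae (hZ.posPart_sub_const _) (hI₁.add hI₂) ?_
    filter_upwards [hle] with ω h
    exact posPart_sub_combo_le hμ h
  simp only [ruObjective]
  nlinarith [mul_le_mul_of_nonneg_left key (inv_nonneg.2 hlam.le)]

-- The equality case of `ruObjective_le_combo`.
lemma ae_le_of_ruObjective_combo_le (hlam : 0 < lam) {Z Z₁ Z₂ : Ω → ℝ} (hZ : Integrable Z P)
    (hZ₁ : Integrable Z₁ P) (hZ₂ : Integrable Z₂ P) {μ : ℝ} (hμ : μ ∈ Ioo 0 1)
    (hle : ∀ᵐ ω ∂P, Z ω ≤ (1 - μ) * Z₁ ω + μ * Z₂ ω) {t₁ t₂ : ℝ}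
    (hge : (1 - μ) * ruObjective P lam Z₁ t₁ + μ * ruObjective P lam Z₂ t₂ ≤
      ruObjective P lam Z ((1 - μ) * t₁ + μ * t₂)) :
    ∀ᵐ ω ∂P, Z ω < (1 - μ) * Z₁ ω + μ * Z₂ ω → Z₁ ω ≤ t₁ ∧ Z₂ ω ≤ t₂ := by
  obtain ⟨hμ₀, hμ₁⟩ := hμ
  set t := (1 - μ) * t₁ + μ * t₂
  have hI₁ := (hZ₁.posPart_sub_const t₁).const_mul (1 - μ)
  have hI₂ := (hZ₂.posPart_sub_const t₂).const_mul μ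
  have hI : Integrable (fun ω => (1 - μ) * max (Z₁ ω - t₁) 0 + μ * max (Z₂ ω - t₂) 0) P :=
    hI₁.add hI₂
  set g : Ω → ℝ := fun ω =>
    (1 - μ) * max (Z₁ ω - t₁) 0 + μ * max (Z₂ ω - t₂) 0 - max (Z ω - t) 0
  have hg_nonneg : 0 ≤ᵐ[P] g := by
    filter_upwards [hle] with ω h
    exact sub_nonneg.2 (posPart_sub_combo_le ⟨hμ₀.le, hμ₁.le⟩ h)
  have hg_zero : g =ᵐ[P] 0 := by
    refine (integral_eq_zero_iff_of_nonneg_ae hg_nonneg (hI.sub (hZ.posPart_sub_const t))).1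
      (le_antisymm ?_ (integral_nonneg_of_ae hg_nonneg))
    rw [integral_sub hI (hZ.posPart_sub_const t), integral_add hI₁ hI₂,
      integral_const_mul, integral_const_mul]
    simp only [ruObjective] at hge
    nlinarith [inv_pos.2 hlam]
  filter_upwards [hg_zero] with ω hω hlt
  have hω : (1 - μ) * max (Z₁ ω - t₁) 0 + μ * max (Z₂ ω - t₂) 0 = max (Z ω - t) 0 := by
    simpa [g, sub_eq_zero] using hω
  have h₁ := le_max_left (Z₁ ω - t₁) 0
  have h₂ := le_max_left (Z₂ ω - t₂) 0
  have hZt : max (Z ω - t) 0 = 0 := by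
    refine max_eq_right (not_lt.1 fun h => ?_)
    rw [max_eq_left h.le] at hω
    nlinarith [mul_le_mul_of_nonneg_left h₁ (sub_nonneg.2 hμ₁.le),
      mul_le_mul_of_nonneg_left h₂ hμ₀.le]
  have hm₁ := le_max_right (Z₁ ω - t₁) 0
  have hm₂ := le_max_right (Z₂ ω - t₂) 0
  constructor <;> nlinarith [mul_nonneg (sub_nonneg.2 hμ₁.le) hm₁, mul_nonneg hμ₀.le hm₂]

lemma ruObjective_min_add_max_le (hlam : 0 < lam) {Z₁ Z₂ : Ω → ℝ} (hZ₁ : Integrable Z₁ P)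
    (hZ₂ : Integrable Z₂ P) {s t : ℝ} (hst : s ≤ t) :
    ruObjective P lam (fun ω => min (Z₁ ω) (Z₂ ω)) s +
        ruObjective P lam (fun ω => max (Z₁ ω) (Z₂ ω)) t ≤
      ruObjective P lam Z₁ s + ruObjective P lam Z₂ t := by
  have hmin : Integrable (fun ω => max (min (Z₁ ω) (Z₂ ω) - s) 0) P :=
    (hZ₁.inf hZ₂).posPart_sub_const s
  have hmax : Integrable (fun ω => max (max (Z₁ ω) (Z₂ ω) - t) 0) P :=
    (hZ₁.sup hZ₂).posPart_sub_const t
  have key : ∫ ω, max (min (Z₁ ω) (Z₂ ω) - s) 0 ∂P + ∫ ω, max (max (Z₁ ω) (Z₂ ω) - t) 0 ∂P ≤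
      ∫ ω, max (Z₁ ω - s) 0 ∂P + ∫ ω, max (Z₂ ω - t) 0 ∂P := by
    rw [← integral_add hmin hmax,
      ← integral_add (hZ₁.posPart_sub_const s) (hZ₂.posPart_sub_const t)]
    exact integral_mono (hmin.add hmax) ((hZ₁.posPart_sub_const s).add (hZ₂.posPart_sub_const t))
      fun ω => posPart_min_add_posPart_max_le hst
  simp only [ruObjective]
  nlinarith [inv_pos.2 hlam]

lemma Monotone.integrable_comp (hℓ : Monotone ℓ) (hW : AEMeasurable W P)
    (hWb : ∀ᵐ ω ∂P, W ω ∈ Icc 0 K) : Integrable (fun ω => ℓ (W ω)) P :=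
  .of_mem_Icc (ℓ 0) (ℓ K) (hℓ.measurable.comp_aemeasurable hW)
    (hWb.mono fun _ h => hℓ.mapsTo_Icc h)

lemma Monotone.exists_rhoLam_eq_ruObjective (hℓ : Monotone ℓ) (hlam : lam ∈ Ioo 0 1)
    (hW : AEMeasurable W P) (hWb : ∀ᵐ ω ∂P, W ω ∈ Icc 0 K) :
    ∃ t ∈ Icc (ℓ 0) (ℓ K), rhoLam P lam ℓ W = ruObjective P lam (fun ω => ℓ (W ω)) t :=
  _root_.exists_rhoLam_eq_ruObjective hlam (hℓ.measurable.comp_aemeasurable hW)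
    (hWb.mono fun _ h => hℓ.mapsTo_Icc h)

lemma Monotone.rhoLam_le_combo (hℓ : Monotone ℓ) (hlam : lam ∈ Ioo 0 1) {W₁ W₂ : Ω → ℝ}
    (hW : AEMeasurable W P) (hWb : ∀ᵐ ω ∂P, W ω ∈ Icc 0 K)
    (hW₁ : AEMeasurable W₁ P) (hW₁b : ∀ᵐ ω ∂P, W₁ ω ∈ Icc 0 K)
    (hW₂ : AEMeasurable W₂ P) (hW₂b : ∀ᵐ ω ∂P, W₂ ω ∈ Icc 0 K) {μ : ℝ} (hμ : μ ∈ Icc 0 1)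
    (hle : ∀ᵐ ω ∂P, ℓ (W ω) ≤ (1 - μ) * ℓ (W₁ ω) + μ * ℓ (W₂ ω)) :
    rhoLam P lam ℓ W ≤ (1 - μ) * rhoLam P lam ℓ W₁ + μ * rhoLam P lam ℓ W₂ := by
  obtain ⟨t₁, -, ht₁⟩ := hℓ.exists_rhoLam_eq_ruObjective hlam hW₁ hW₁b
  obtain ⟨t₂, -, ht₂⟩ := hℓ.exists_rhoLam_eq_ruObjective hlam hW₂ hW₂b
  have hZ := hℓ.integrable_comp hW hWb
  rw [ht₁, ht₂]
  exact (rhoLam_le_ruObjective ⟨hlam.1, hlam.2.le⟩ hZ _).trans <| ruObjective_le_combo hlam.1 hZ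
    (hℓ.integrable_comp hW₁ hW₁b) (hℓ.integrable_comp hW₂ hW₂b) hμ hle t₁ t₂

lemma Monotone.rhoLam_min_add_rhoLam_max_le (hℓ : Monotone ℓ) (hlam : lam ∈ Ioo 0 1)
    {W₁ W₂ : Ω → ℝ} (hW₁ : AEMeasurable W₁ P) (hW₁b : ∀ᵐ ω ∂P, W₁ ω ∈ Icc 0 K)
    (hW₂ : AEMeasurable W₂ P) (hW₂b : ∀ᵐ ω ∂P, W₂ ω ∈ Icc 0 K) :
    rhoLam P lam ℓ (fun ω => min (W₁ ω) (W₂ ω)) + rhoLam P lam ℓ (fun ω => max (W₁ ω) (W₂ ω)) ≤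
      rhoLam P lam ℓ W₁ + rhoLam P lam ℓ W₂ := by
  obtain ⟨t₁, -, ht₁⟩ := hℓ.exists_rhoLam_eq_ruObjective hlam hW₁ hW₁b
  obtain ⟨t₂, -, ht₂⟩ := hℓ.exists_rhoLam_eq_ruObjective hlam hW₂ hW₂b
  have hZ₁ := hℓ.integrable_comp hW₁ hW₁b
  have hZ₂ := hℓ.integrable_comp hW₂ hW₂b
  have hmin : (fun ω => ℓ (min (W₁ ω) (W₂ ω))) = fun ω => min (ℓ (W₁ ω)) (ℓ (W₂ ω)) :=
    funext fun _ => hℓ.map_min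
  have hmax : (fun ω => ℓ (max (W₁ ω) (W₂ ω))) = fun ω => max (ℓ (W₁ ω)) (ℓ (W₂ ω)) :=
    funext fun _ => hℓ.map_max
  have hρmin := rhoLam_le_ruObjective (W := fun ω => min (W₁ ω) (W₂ ω)) ⟨hlam.1, hlam.2.le⟩
    (hmin ▸ hZ₁.inf hZ₂ : Integrable (fun ω => ℓ (min (W₁ ω) (W₂ ω))) P)
  have hρmax := rhoLam_le_ruObjective (W := fun ω => max (W₁ ω) (W₂ ω)) ⟨hlam.1, hlam.2.le⟩
    (hmax ▸ hZ₁.sup hZ₂ : Integrable (fun ω => ℓ (max (W₁ ω) (W₂ ω))) P)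
  simp only [hmin, hmax] at hρmin hρmax
  rw [ht₁, ht₂]
  rcases le_total t₁ t₂ with h | h
  · linarith [hρmin t₁, hρmax t₂, ruObjective_min_add_max_le hlam.1 hZ₁ hZ₂ h (P := P)]
  · have := ruObjective_min_add_max_le hlam.1 hZ₂ hZ₁ h (P := P)
    simp only [min_comm (ℓ (W₂ _)), max_comm (ℓ (W₂ _))] at this
    linarith [hρmin t₂, hρmax t₁]

end RockafellarUryasev

section Feasibility

variable {Ω : Type*} [MeasurableSpace Ω] {P : Measure Ω} {φ : Ω → ℝ} {K v : ℝ}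

lemma integrable_mul_of_ae_mem_Icc (hφ : Integrable φ P) {W : Ω → ℝ} (hW : AEMeasurable W P)
    (hWb : ∀ᵐ ω ∂P, W ω ∈ Icc 0 K) : Integrable (fun ω => φ ω * W ω) P :=
  hφ.mul_bdd hW.aestronglyMeasurable <| hWb.mono fun _ h => by
    rw [Real.norm_eq_abs, abs_of_nonneg h.1]; exact h.2

lemma feasible_of_ae_mem_Icc {W : Ω → ℝ} (hW : AEMeasurable W P)
    (hWb : ∀ᵐ ω ∂P, W ω ∈ Icc 0 K) (hv : v ≤ ∫ ω, φ ω * W ω ∂P) : Feasible P φ K v W :=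
  ⟨memLp_top_of_bound hW.aestronglyMeasurable K <| hWb.mono fun _ h => by
    rw [Real.norm_eq_abs, abs_of_nonneg h.1]; exact h.2, hWb, hv⟩

lemma Feasible.aemeasurable {W : Ω → ℝ} (h : Feasible P φ K v W) : AEMeasurable W P :=
  h.1.aestronglyMeasurable.aemeasurable

lemma Feasible.integrable_mul (hφ : Integrable φ P) {W : Ω → ℝ} (h : Feasible P φ K v W) :
    Integrable (fun ω => φ ω * W ω) P :=
  integrable_mul_of_ae_mem_Icc hφ h.aemeasurable h.2.1

lemma feasible_combo (hφ : Integrable φ P) {W₁ W₂ : Ω → ℝ} (hW₁ : AEMeasurable W₁ P)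
    (hW₁b : ∀ᵐ ω ∂P, W₁ ω ∈ Icc 0 K) (hW₂ : AEMeasurable W₂ P) (hW₂b : ∀ᵐ ω ∂P, W₂ ω ∈ Icc 0 K)
    {μ : ℝ} (hμ : μ ∈ Icc 0 1) :
    Feasible P φ K ((1 - μ) * ∫ ω, φ ω * W₁ ω ∂P + μ * ∫ ω, φ ω * W₂ ω ∂P)
      (fun ω => (1 - μ) * W₁ ω + μ * W₂ ω) := by
  obtain ⟨hμ₀, hμ₁⟩ := hμ
  refine feasible_of_ae_mem_Icc ((hW₁.const_mul _).add (hW₂.const_mul _)) ?_ (le_of_eq ?_)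
  · filter_upwards [hW₁b, hW₂b] with ω h₁ h₂
    constructor
    · nlinarith [mul_nonneg (sub_nonneg.2 hμ₁) h₁.1, mul_nonneg hμ₀ h₂.1]
    · nlinarith [mul_le_mul_of_nonneg_left h₁.2 (sub_nonneg.2 hμ₁),
        mul_le_mul_of_nonneg_left h₂.2 hμ₀]
  · rw [← integral_const_mul, ← integral_const_mul,
      ← integral_add ((integrable_mul_of_ae_mem_Icc hφ hW₁ hW₁b).const_mul _)
        ((integrable_mul_of_ae_mem_Icc hφ hW₂ hW₂b).const_mul _)]
    congr 1 with ω
    ring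

lemma ae_eq_of_ae_le_of_integral_mul_eq (hφ : ∀ᵐ ω ∂P, 0 < φ ω) {W₁ W₂ : Ω → ℝ}
    (h₁ : Integrable (fun ω => φ ω * W₁ ω) P) (h₂ : Integrable (fun ω => φ ω * W₂ ω) P)
    (hle : W₁ ≤ᵐ[P] W₂) (heq : ∫ ω, φ ω * W₁ ω ∂P = ∫ ω, φ ω * W₂ ω ∂P) : W₁ =ᵐ[P] W₂ := by
  have hnonneg : 0 ≤ᵐ[P] fun ω => φ ω * W₂ ω - φ ω * W₁ ω := by
    filter_upwards [hφ, hle] with ω hφω h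
    simpa [← mul_sub] using mul_nonneg hφω.le (sub_nonneg.2 h)
  have hzero := (integral_eq_zero_iff_of_nonneg_ae hnonneg (h₂.sub h₁)).1
    (by rw [integral_sub h₂ h₁, heq, sub_self])
  filter_upwards [hzero, hφ] with ω h hφω
  have : φ ω * (W₂ ω - W₁ ω) = 0 := by rw [mul_sub]; exact h
  linarith [(mul_eq_zero.1 this).resolve_left hφω.ne']

end Feasibility

section Solutions

variable {Ω : Type*} [MeasurableSpace Ω] {P : Measure Ω} [IsProbabilityMeasure P]
  {lam K v : ℝ} {ℓ : ℝ → ℝ} {φ W : Ω → ℝ}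

lemma ConvexOn.le_combo (hℓ : ConvexOn ℝ univ ℓ) {μ : ℝ} (hμ : μ ∈ Icc 0 1) (x y : ℝ) :
    ℓ ((1 - μ) * x + μ * y) ≤ (1 - μ) * ℓ x + μ * ℓ y :=
  hℓ.2 (mem_univ x) (mem_univ y) (sub_nonneg.2 hμ.2) hμ.1 (sub_add_cancel 1 μ)

lemma StrictMono.lt_rhoLam (hℓ : StrictMono ℓ) (hlam : lam ∈ Ioc 0 1) (hW : AEMeasurable W P)
    (hWb : ∀ᵐ ω ∂P, W ω ∈ Icc 0 K) (hW₀ : ¬W =ᵐ[P] 0) : ℓ 0 < rhoLam P lam ℓ W := by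
  have hZ := hℓ.monotone.integrable_comp hW hWb
  refine lt_of_lt_of_le ?_ (integral_le_rhoLam hlam hZ)
  by_contra! h
  have hnonneg : 0 ≤ᵐ[P] fun ω => ℓ (W ω) - ℓ 0 :=
    hWb.mono fun ω hω => sub_nonneg.2 (hℓ.monotone hω.1)
  have hzero := (integral_eq_zero_iff_of_nonneg_ae hnonneg (hZ.sub (integrable_const _))).1 <|
    le_antisymm (by simpa [integral_sub hZ (integrable_const _)] using h)
      (integral_nonneg_of_ae hnonneg)
  exact hW₀ (hzero.mono fun ω hω => hℓ.injective (sub_eq_zero.1 hω))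

-- A slack budget could be used to scale `W` down, which strictly lowers the risk:
-- `ρ(sW) ≤ (1 - s) ℓ(0) + s ρ(W) < ρ(W)` by convexity.
lemma IsLamSolution.integral_mul_eq (hlam : lam ∈ Ioo 0 1) (hℓ : ConvexOn ℝ univ ℓ)
    (hℓm : StrictMono ℓ) (hφ : Integrable φ P) (hv : 0 ≤ v)
    (hW : IsLamSolution P lam ℓ φ K v W) : ∫ ω, φ ω * W ω ∂P = v := by
  obtain ⟨hWf, hWopt⟩ := hW
  refine le_antisymm (not_lt.1 fun hgt => ?_) hWf.2.2
  have hpos : 0 < ∫ ω, φ ω * W ω ∂P := hv.trans_lt hgt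
  set s := v / ∫ ω, φ ω * W ω ∂P
  have hs : s ∈ Icc 0 1 := ⟨div_nonneg hv hpos.le, div_le_one_of_le₀ hgt.le hpos.le⟩
  have hs₁ : s < 1 := (div_lt_one hpos).2 hgt
  have hK : 0 ≤ K := let ⟨_, h⟩ := hWf.2.1.exists; h.1.trans h.2
  have hsW : Feasible P φ K v fun ω => (1 - s) * 0 + s * W ω := by
    convert feasible_combo hφ aemeasurable_const (ae_of_all _ fun _ => ⟨le_rfl, hK⟩)
      hWf.aemeasurable hWf.2.1 hs using 1
    simp [s, div_mul_cancel₀ _ hpos.ne']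
  have hW₀ : ¬W =ᵐ[P] 0 := fun h => hpos.ne' <| by
    simp [integral_congr_ae (h.mono fun ω hω => by simp [hω] : (fun ω => φ ω * W ω) =ᵐ[P] 0)]
  have hlt := hℓm.lt_rhoLam ⟨hlam.1, hlam.2.le⟩ hWf.aemeasurable hWf.2.1 hW₀
  have hconv := hℓm.monotone.rhoLam_le_combo hlam hsW.aemeasurable hsW.2.1 aemeasurable_const
    (ae_of_all _ fun _ => ⟨le_rfl, hK⟩) hWf.aemeasurable hWf.2.1 hs
    (ae_of_all _ fun ω => hℓ.le_combo hs 0 (W ω))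
  have h₀ := rhoLam_const_le (P := P) (ℓ := ℓ) ⟨hlam.1, hlam.2.le⟩ 0
  nlinarith [hWopt _ hsW]

lemma IsLamSolution.exists_threshold (hlam : lam ∈ Ioo 0 1) (hℓ : ConvexOn ℝ univ ℓ)
    (hℓm : StrictMono ℓ) (hφ : Integrable φ P) (hφpos : ∀ᵐ ω ∂P, 0 < φ ω) (hv : 0 ≤ v)
    (hW : IsLamSolution P lam ℓ φ K v W) :
    ∃ t, (∀ᵐ ω ∂P, t ≤ ℓ (W ω)) ∧ rhoLam P lam ℓ W = ruObjective P lam (fun ω => ℓ (W ω)) t := by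
  obtain ⟨t, ht, hρ⟩ := hℓm.monotone.exists_rhoLam_eq_ruObjective hlam hW.1.aemeasurable hW.1.2.1
  obtain ⟨u, hu, rfl⟩ : ∃ u ∈ Icc 0 K, ℓ u = t :=
    intermediate_value_Icc (hℓm.le_iff_le.1 (ht.1.trans ht.2))
      ((hℓ.continuousOn isOpen_univ).mono (subset_univ _)) ht
  have hW'b : ∀ᵐ ω ∂P, max (W ω) u ∈ Icc 0 K :=
    hW.1.2.1.mono fun ω h => ⟨h.1.trans (le_max_left _ _), max_le h.2 hu.2⟩
  have hW'm : AEMeasurable (fun ω => max (W ω) u) P := hW.1.aemeasurable.max aemeasurable_const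
  have hW'f : Feasible P φ K v fun ω => max (W ω) u :=
    feasible_of_ae_mem_Icc hW'm hW'b <| hW.1.2.2.trans <|
      integral_mono_ae (hW.1.integrable_mul hφ) (integrable_mul_of_ae_mem_Icc hφ hW'm hW'b) <|
        hφpos.mono fun ω h => mul_le_mul_of_nonneg_left (le_max_left _ _) h.le
  have hρ' : rhoLam P lam ℓ (fun ω => max (W ω) u) ≤ rhoLam P lam ℓ W := by
    refine (rhoLam_le_ruObjective ⟨hlam.1, hlam.2.le⟩ (hℓm.monotone.integrable_comp hW'm hW'b)
      (ℓ u)).trans_eq ?_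
    simp only [hρ, ruObjective, hℓm.monotone.map_max, ← max_sub_sub_right, sub_self,
      max_assoc, max_self]
  have hW'sol : IsLamSolution P lam ℓ φ K v fun ω => max (W ω) u :=
    ⟨hW'f, fun Y hY => hρ'.trans (hW.2 Y hY)⟩
  have heq : W =ᵐ[P] fun ω => max (W ω) u :=
    ae_eq_of_ae_le_of_integral_mul_eq hφpos (hW.1.integrable_mul hφ) (hW'f.integrable_mul hφ)
      (ae_of_all _ fun ω => le_max_left _ _) <|
        (hW.integral_mul_eq hlam hℓ hℓm hφ hv).trans (hW'sol.integral_mul_eq hlam hℓ hℓm hφ hv).symm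
  refine ⟨ℓ u, heq.mono fun ω h => ?_, hρ⟩
  rw [h]
  exact hℓm.monotone (le_max_right _ _)

lemma IsLamSolution.ae_eq (hlam : lam ∈ Ioo 0 1) (hℓ : StrictConvexOn ℝ univ ℓ)
    (hℓm : StrictMono ℓ) (hφ : Integrable φ P) (hφpos : ∀ᵐ ω ∂P, 0 < φ ω) (hv : 0 ≤ v)
    {W₁ W₂ : Ω → ℝ} (h₁ : IsLamSolution P lam ℓ φ K v W₁) (h₂ : IsLamSolution P lam ℓ φ K v W₂) :
    W₁ =ᵐ[P] W₂ := by
  have hb₁ := h₁.integral_mul_eq hlam hℓ.convexOn hℓm hφ hv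
  have hb₂ := h₂.integral_mul_eq hlam hℓ.convexOn hℓm hφ hv
  obtain ⟨t₁, ht₁, hρ₁⟩ := h₁.exists_threshold hlam hℓ.convexOn hℓm hφ hφpos hv
  obtain ⟨t₂, ht₂, hρ₂⟩ := h₂.exists_threshold hlam hℓ.convexOn hℓm hφ hφpos hv
  have hμ : (1 / 2 : ℝ) ∈ Icc 0 1 := by norm_num
  have hM := feasible_combo hφ h₁.1.aemeasurable h₁.1.2.1 h₂.1.aemeasurable h₂.1.2.1 hμ
  rw [hb₁, hb₂, show (1 - 1 / 2) * v + 1 / 2 * v = v by ring] at hM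
  have hZ {W : Ω → ℝ} (hW : Feasible P φ K v W) :=
    hℓm.monotone.integrable_comp hW.aemeasurable hW.2.1
  have hcombo : ∀ᵐ ω ∂P, W₁ ω ≠ W₂ ω → ℓ ((1 - 1 / 2) * W₁ ω + 1 / 2 * W₂ ω) <
      (1 - 1 / 2) * ℓ (W₁ ω) + 1 / 2 * ℓ (W₂ ω) := ae_of_all _ fun ω hne =>
    hℓ.2 (mem_univ _) (mem_univ _) hne (by norm_num) (by norm_num) (by norm_num)
  have hle := ae_le_of_ruObjective_combo_le hlam.1 (hZ hM) (hZ h₁.1) (hZ h₂.1)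
    (by norm_num : (1 / 2 : ℝ) ∈ Ioo 0 1)
    (ae_of_all _ fun ω => hℓ.convexOn.le_combo hμ _ _) (t₁ := t₁) (t₂ := t₂) <| by
    rw [← hρ₁, ← hρ₂]
    linarith [h₁.2 _ hM, h₂.2 _ hM, rhoLam_le_ruObjective ⟨hlam.1, hlam.2.le⟩ (hZ hM)
      ((1 - 1 / 2) * t₁ + 1 / 2 * t₂)]
  have hthr : ∀ᵐ ω ∂P, W₁ ω ≠ W₂ ω → ℓ (W₁ ω) = t₁ ∧ ℓ (W₂ ω) = t₂ := by
    filter_upwards [hcombo, hle, ht₁, ht₂] with ω hc hl h₁ h₂ hne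
    obtain ⟨h₁', h₂'⟩ := hl (hc hne)
    exact ⟨le_antisymm h₁' h₁, le_antisymm h₂' h₂⟩
  rcases le_total t₁ t₂ with ht | ht
  · refine ae_eq_of_ae_le_of_integral_mul_eq hφpos (h₁.1.integrable_mul hφ)
      (h₂.1.integrable_mul hφ) ?_ (hb₁.trans hb₂.symm)
    filter_upwards [hthr] with ω h
    by_cases hne : W₁ ω = W₂ ω
    · exact hne.le
    · exact hℓm.le_iff_le.1 ((h hne).1.trans_le (ht.trans_eq (h hne).2.symm))
  · refine (ae_eq_of_ae_le_of_integral_mul_eq hφpos (h₂.1.integrable_mul hφ)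
      (h₁.1.integrable_mul hφ) ?_ (hb₂.trans hb₁.symm)).symm
    filter_upwards [hthr] with ω h
    by_cases hne : W₁ ω = W₂ ω
    · exact hne.ge
    · exact hℓm.le_iff_le.1 ((h hne).2.trans_le (ht.trans_eq (h hne).1.symm))

end Solutions

section Monotonicity

variable {Ω : Type*} [MeasurableSpace Ω] {P : Measure Ω} [IsProbabilityMeasure P]
  {lam K : ℝ} {ℓ : ℝ → ℝ} {φ : Ω → ℝ}

lemma exists_ordered_feasible (hlam : lam ∈ Ioo 0 1) (hℓ : ConvexOn ℝ univ ℓ) (hℓm : Monotone ℓ)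
    (hφ : Integrable φ P) (hφpos : ∀ᵐ ω ∂P, 0 ≤ φ ω) {v v' : ℝ} (hvv' : v < v') {X X' : Ω → ℝ}
    (hX : Feasible P φ K v X) (hX' : Feasible P φ K v' X') (hb : ∫ ω, φ ω * X ω ∂P = v)
    (hb' : ∫ ω, φ ω * X' ω ∂P = v') :
    ∃ Y Y' : Ω → ℝ, Feasible P φ K v Y ∧ Feasible P φ K v' Y' ∧ Y ≤ᵐ[P] Y' ∧
      rhoLam P lam ℓ Y + rhoLam P lam ℓ Y' ≤ rhoLam P lam ℓ X + rhoLam P lam ℓ X' := by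
  set A := fun ω => min (X ω) (X' ω)
  set B := fun ω => max (X ω) (X' ω)
  have hA : AEMeasurable A P := hX.aemeasurable.min hX'.aemeasurable
  have hB : AEMeasurable B P := hX.aemeasurable.max hX'.aemeasurable
  have hAb : ∀ᵐ ω ∂P, A ω ∈ Icc 0 K := by
    filter_upwards [hX.2.1, hX'.2.1] with ω h h'
    exact ⟨le_min h.1 h'.1, (min_le_left _ _).trans h.2⟩
  have hBb : ∀ᵐ ω ∂P, B ω ∈ Icc 0 K := by
    filter_upwards [hX.2.1, hX'.2.1] with ω h h'
    exact ⟨h.1.trans (le_max_left _ _), max_le h.2 h'.2⟩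
  have hab : ∫ ω, φ ω * A ω ∂P + ∫ ω, φ ω * B ω ∂P = v + v' := by
    rw [← integral_add (integrable_mul_of_ae_mem_Icc hφ hA hAb)
      (integrable_mul_of_ae_mem_Icc hφ hB hBb), ← hb, ← hb',
      ← integral_add (hX.integrable_mul hφ) (hX'.integrable_mul hφ)]
    simp only [A, B, ← mul_add, min_add_max]
  have ha : ∫ ω, φ ω * A ω ∂P ≤ v :=
    hb ▸ integral_mono_ae (integrable_mul_of_ae_mem_Icc hφ hA hAb) (hX.integrable_mul hφ)
      (hφpos.mono fun ω h => mul_le_mul_of_nonneg_left (min_le_left _ _) h)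
  obtain ⟨μ, hμ, hμ_half, hμv⟩ : ∃ μ ∈ Icc (0 : ℝ) 1, μ ≤ 1 / 2 ∧
      (1 - μ) * ∫ ω, φ ω * A ω ∂P + μ * ∫ ω, φ ω * B ω ∂P = v := by
    have hpos : 0 < ∫ ω, φ ω * B ω ∂P - ∫ ω, φ ω * A ω ∂P := by linarith
    refine ⟨(v - ∫ ω, φ ω * A ω ∂P) / (∫ ω, φ ω * B ω ∂P - ∫ ω, φ ω * A ω ∂P),
      ⟨div_nonneg (by linarith) hpos.le, (div_le_one hpos).2 (by linarith)⟩,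
      (div_le_iff₀ hpos).2 (by linarith), ?_⟩
    field_simp
    ring
  have hY := hμv ▸ feasible_combo hφ hA hAb hB hBb hμ
  have hY' := (by linarith : (1 - μ) * ∫ ω, φ ω * B ω ∂P + μ * ∫ ω, φ ω * A ω ∂P = v') ▸
    feasible_combo hφ hB hBb hA hAb hμ
  refine ⟨_, _, hY, hY', ae_of_all _ fun ω => ?_, ?_⟩
  · nlinarith [min_le_max (a := X ω) (b := X' ω)]
  · have h₁ := hℓm.rhoLam_le_combo hlam hY.aemeasurable hY.2.1 hA hAb hB hBb hμ
      (ae_of_all _ fun ω => hℓ.le_combo hμ _ _)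
    have h₂ := hℓm.rhoLam_le_combo hlam hY'.aemeasurable hY'.2.1 hB hBb hA hAb hμ
      (ae_of_all _ fun ω => hℓ.le_combo hμ _ _)
    linarith [hℓm.rhoLam_min_add_rhoLam_max_le hlam hX.aemeasurable hX.2.1 hX'.aemeasurable hX'.2.1]

end Monotonicity

theorem rhoLam_solutions_monotone_in_level_general
    {Ω : Type*} [MeasurableSpace Ω] (P : Measure Ω) [IsProbabilityMeasure P]
    (φ : Ω → ℝ) (hφint : Integrable φ P)
    (hφpos : ∀ᵐ ω ∂P, 0 < φ ω)
    (K : ℝ) (lam : ℝ) (hlam : lam ∈ Ioo (0:ℝ) 1)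
    (ℓ : ℝ → ℝ) (hℓconv : StrictConvexOn ℝ univ ℓ) (hℓmono : StrictMono ℓ)
    (v v' : ℝ) (hv : 0 ≤ v) (hvv' : v < v')
    (X X' : Ω → ℝ)
    (hX : IsLamSolution P lam ℓ φ K v X) (hX' : IsLamSolution P lam ℓ φ K v' X') :
    ∀ᵐ ω ∂P, X ω ≤ X' ω := by
  have hv'_nonneg : 0 ≤ v' := hv.trans hvv'.le
  obtain ⟨Y, Y', hY, hY', hYY', hρ⟩ := exists_ordered_feasible hlam hℓconv.convexOn
    hℓmono.monotone hφint (hφpos.mono fun _ h => h.le) hvv' hX.1 hX'.1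
    (hX.integral_mul_eq hlam hℓconv.convexOn hℓmono hφint hv)
    (hX'.integral_mul_eq hlam hℓconv.convexOn hℓmono hφint hv'_nonneg)
  have hYsol : IsLamSolution P lam ℓ φ K v Y :=
    ⟨hY, fun Z hZ => by linarith [hX'.2 Y' hY', hX.2 Z hZ]⟩
  have hY'sol : IsLamSolution P lam ℓ φ K v' Y' :=
    ⟨hY', fun Z hZ => by linarith [hX.2 Y hY, hX'.2 Z hZ]⟩
  filter_upwards [hX.ae_eq hlam hℓconv hℓmono hφint hφpos hv hYsol,
    hX'.ae_eq hlam hℓconv hℓmono hφint hφpos hv'_nonneg hY'sol, hYY'] with ω h h' hle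
  rw [h, h']
  exact hle

/-- Lemma 3.2: the solutions of the Neyman–Pearson problem for `ρ_λ`
are pointwise increasing in the capital level: if `0 ≤ v < v' ≤ K`, then the solutions
at levels `v` and `v'` satisfy `X*(v) ≤ X*(v')` P-a.s. -/
theorem rhoLam_solutions_monotone_in_level
    {Ω : Type*} [MeasurableSpace Ω] (P : Measure Ω) [IsProbabilityMeasure P]
    (hP : Atomless P)
    (φ : Ω → ℝ) (hφm : Measurable φ) (hφint : Integrable φ P)
    (hφpos : ∀ᵐ ω ∂P, 0 < φ ω) (hφ1 : ∫ ω, φ ω ∂P = 1)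
    (hφunb : ∀ M : ℝ, 0 < P {ω | M < φ ω})
    (hFcont : ContinuousOn (fun x : ℝ => (P {ω | φ ω ≤ x}).toReal) (Ioi 0))
    (hFmono : StrictMonoOn (fun x : ℝ => (P {ω | φ ω ≤ x}).toReal) (Ioi 0))
    (K : ℝ) (hK : 0 < K) (lam : ℝ) (hlam : lam ∈ Ioo (0:ℝ) 1)
    (ℓ : ℝ → ℝ) (hℓconv : StrictConvexOn ℝ univ ℓ) (hℓmono : StrictMono ℓ)
    (hℓC1 : ContDiff ℝ 1 ℓ) (hℓ'pos : ∀ x : ℝ, 0 < deriv ℓ x)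
    (v v' : ℝ) (hv : 0 ≤ v) (hvv' : v < v') (hv' : v' ≤ K)
    (X X' : Ω → ℝ)
    (hX : IsLamSolution P lam ℓ φ K v X) (hX' : IsLamSolution P lam ℓ φ K v' X') :
    ∀ᵐ ω ∂P, X ω ≤ X' ω :=
  rhoLam_solutions_monotone_in_level_general P φ hφint hφpos K lam hlam ℓ hℓconv hℓmono v v' hv hvv'
    X X' hX hX'
end

section
/- Let β = β(v) denote the constant (equal to the essential infimum of the unique solution X*(v)) in the representation X*(v) = β + (I(c(φ ∨ y)) − I(cy)) ∧ (K − β) of the unique solution of the Neyman–Pearson problem for ρ_λ at level v. Then β(v) < v for all v ∈ (0,K), and β(v) > 0 whenever v > K·E[φ·1_{φ≥q}]. -/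
open MeasureTheory Filter Topology Set

/-!
On `{φ ≤ y}` the solution equals `min β K`; elsewhere it is `min (I (c φ)) K` with
`I (c φ) ≥ I (c y) = I (ℓ′ β) = β`, strictly where `φ > y`, because `I` inverts the strictly
increasing `ℓ′`. If `β ≥ v`, the solution therefore dominates the feasible constant `v`, and
`ℓ v = ρ_λ(−v) ≥ ρ_λ(−X) ≥ E_P[ℓ X] ≥ ℓ v` (take `Q = P`) forces `X = v` a.s., contradicting
`X > v` on `{φ > y}`, which has positive probability since `φ` is unbounded. If `β = 0`, the
solution vanishes on `{φ < q} ⊆ {φ ≤ y}`, so `E[φ X] ≤ K E[φ; φ ≥ q] < v`, contradicting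
feasibility.
-/
section ExtendedInverse

variable {ℓ : ℝ → ℝ} {I : ℝ → EReal}

theorem IsExtendedInverse.eq_top_or_exists_deriv_eq (hI : IsExtendedInverse ℓ I)
    (hcont : Continuous (deriv ℓ)) {β z : ℝ} (hz : deriv ℓ β ≤ z) :
    I z = ⊤ ∨ ∃ r, deriv ℓ r = z ∧ I z = r := by
  by_cases h : ∃ x, z ≤ deriv ℓ x
  · obtain ⟨x, hx⟩ := h
    obtain ⟨r, -, hr⟩ := intermediate_value_uIcc hcont.continuousOn (Icc_subset_uIcc ⟨hz, hx⟩)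
    exact Or.inr ⟨r, hr, hr ▸ hI.1 r⟩
  · simp only [not_exists, not_le] at h
    exact Or.inl (hI.2.1 z h)

theorem IsExtendedInverse.coe_le_apply (hI : IsExtendedInverse ℓ I)
    (hcont : Continuous (deriv ℓ)) (hmono : StrictMono (deriv ℓ)) {β z : ℝ}
    (hz : deriv ℓ β ≤ z) : (β : EReal) ≤ I z := by
  rcases hI.eq_top_or_exists_deriv_eq hcont hz with h | ⟨r, rfl, h⟩
  · simp [h]
  · rw [h, EReal.coe_le_coe_iff]
    exact hmono.le_iff_le.1 hz

theorem IsExtendedInverse.coe_lt_apply (hI : IsExtendedInverse ℓ I)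
    (hcont : Continuous (deriv ℓ)) (hmono : StrictMono (deriv ℓ)) {β z : ℝ}
    (hz : deriv ℓ β < z) : (β : EReal) < I z := by
  rcases hI.eq_top_or_exists_deriv_eq hcont hz.le with h | ⟨r, rfl, h⟩
  · simp [h]
  · rw [h, EReal.coe_lt_coe_iff]
    exact hmono.lt_iff_lt.1 hz

end ExtendedInverse

theorem EReal.coe_add_toReal_min_sub {s : EReal} (hs : s ≠ ⊥) (β K : ℝ) :
    ((β + (min (s - β) ((K - β : ℝ) : EReal)).toReal : ℝ) : EReal) = min s K := by
  induction s using EReal.rec with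
  | bot => exact absurd rfl hs
  | coe r =>
    rw [← EReal.coe_sub, ← EReal.coe_strictMono.monotone.map_min, EReal.toReal_coe,
      ← EReal.coe_strictMono.monotone.map_min, ← min_add_add_left, add_sub_cancel,
      add_sub_cancel]
  | top =>
    rw [EReal.top_sub_coe, min_eq_right le_top, EReal.toReal_coe, min_eq_right le_top,
      add_sub_cancel]

theorem LamForm.ae_exists_coe_eq_min {Ω : Type*} [MeasurableSpace Ω] {P : Measure Ω}
    {φ : Ω → ℝ} {ℓ : ℝ → ℝ} {I : ℝ → EReal} {K q : ℝ} {X : Ω → ℝ} {β y c : ℝ}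
    (hform : LamForm P φ ℓ I K q X β y c) (hI : IsExtendedInverse ℓ I)
    (hcont : Continuous (deriv ℓ)) (hmono : StrictMono (deriv ℓ)) (hy : 0 < y)
    (hℓ' : 0 < deriv ℓ β) :
    ∀ᵐ ω ∂P, ∃ s : EReal, (X ω : EReal) = min s K ∧ (β : EReal) ≤ s ∧
      (φ ω ≤ y → s = β) ∧ (y < φ ω → (β : EReal) < s) := by
  obtain ⟨-, -, hc, hX⟩ := hform
  have hcy : c * y = deriv ℓ β := by rw [hc, div_mul_cancel₀ _ hy.ne']
  have hc0 : 0 < c := hc ▸ div_pos hℓ' hy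
  filter_upwards [hX] with ω hω
  have hβs : (β : EReal) ≤ I (c * max (φ ω) y) :=
    hI.coe_le_apply hcont hmono (hcy ▸ mul_le_mul_of_nonneg_left (le_max_right _ _) hc0.le)
  refine ⟨I (c * max (φ ω) y), ?_, hβs, fun h => ?_, fun h => ?_⟩
  · rw [hω, hcy, hI.1,
      EReal.coe_add_toReal_min_sub (ne_bot_of_le_ne_bot (EReal.coe_ne_bot β) hβs)]
  · rw [max_eq_right h, hcy, hI.1]
  · rw [max_eq_left h.le]
    exact hI.coe_lt_apply hcont hmono (hcy ▸ mul_lt_mul_of_pos_left h hc0)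

theorem LamForm.ae_le_and_lt_of_le {Ω : Type*} [MeasurableSpace Ω] {P : Measure Ω}
    {φ : Ω → ℝ} {ℓ : ℝ → ℝ} {I : ℝ → EReal} {K q : ℝ} {X : Ω → ℝ} {β y c : ℝ}
    (hform : LamForm P φ ℓ I K q X β y c) (hI : IsExtendedInverse ℓ I)
    (hcont : Continuous (deriv ℓ)) (hmono : StrictMono (deriv ℓ)) (hy : 0 < y)
    (hℓ' : 0 < deriv ℓ β) {t : ℝ} (htβ : t ≤ β) (htK : t < K) :
    ∀ᵐ ω ∂P, t ≤ X ω ∧ (y < φ ω → t < X ω) := by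
  filter_upwards [hform.ae_exists_coe_eq_min hI hcont hmono hy hℓ'] with ω hω
  obtain ⟨s, hXs, hβs, -, hβs'⟩ := hω
  refine ⟨?_, fun h => ?_⟩
  · rw [← EReal.coe_le_coe_iff, hXs]
    exact le_min ((EReal.coe_le_coe htβ).trans hβs) (EReal.coe_le_coe htK.le)
  · rw [← EReal.coe_lt_coe_iff, hXs]
    exact lt_min ((EReal.coe_le_coe htβ).trans_lt (hβs' h)) (EReal.coe_lt_coe htK)

theorem LamForm.ae_le_of_le {Ω : Type*} [MeasurableSpace Ω] {P : Measure Ω}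
    {φ : Ω → ℝ} {ℓ : ℝ → ℝ} {I : ℝ → EReal} {K q : ℝ} {X : Ω → ℝ} {β y c : ℝ}
    (hform : LamForm P φ ℓ I K q X β y c) (hI : IsExtendedInverse ℓ I)
    (hcont : Continuous (deriv ℓ)) (hmono : StrictMono (deriv ℓ)) (hy : 0 < y)
    (hℓ' : 0 < deriv ℓ β) : ∀ᵐ ω ∂P, φ ω ≤ y → X ω ≤ β := by
  filter_upwards [hform.ae_exists_coe_eq_min hI hcont hmono hy hℓ'] with ω hω hφy
  obtain ⟨s, hXs, -, hs, -⟩ := hω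
  rw [← EReal.coe_le_coe_iff, hXs, ← hs hφy]
  exact min_le_left s K

section RiskMeasure

variable {Ω : Type*} [MeasurableSpace Ω] {P : Measure Ω} [IsProbabilityMeasure P] {lam : ℝ}
  {ℓ : ℝ → ℝ}

theorem ae_rnDeriv_self_le_ofReal_one_div (hlam0 : 0 < lam) (hlam1 : lam ≤ 1) :
    ∀ᵐ ω ∂P, P.rnDeriv P ω ≤ ENNReal.ofReal (1 / lam) := by
  filter_upwards [P.rnDeriv_self] with ω hω
  rw [hω, ENNReal.one_le_ofReal, le_div_iff₀ hlam0, one_mul]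
  exact hlam1

theorem rhoLam_const (hlam0 : 0 < lam) (hlam1 : lam ≤ 1) (v : ℝ) :
    rhoLam P lam ℓ (fun _ => v) = ℓ v := by
  have hset : {r : ℝ | ∃ Q : Measure Ω, IsProbabilityMeasure Q ∧ Q ≪ P ∧
      (∀ᵐ ω ∂P, Q.rnDeriv P ω ≤ ENNReal.ofReal (1 / lam)) ∧ r = ∫ _, ℓ v ∂Q} = {ℓ v} := by
    refine eq_singleton_iff_unique_mem.2 ⟨⟨P, inferInstance, .rfl,
      ae_rnDeriv_self_le_ofReal_one_div hlam0 hlam1, by simp⟩, ?_⟩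
    rintro r ⟨Q, hQ, -, -, rfl⟩
    simp
  rw [rhoLam, hset, csSup_singleton]

theorem integral_le_rhoLam_s10 (hlam0 : 0 < lam) (hlam1 : lam ≤ 1) {X : Ω → ℝ} {a b : ℝ}
    (hX : ∀ᵐ ω ∂P, ℓ (X ω) ∈ Icc a b) : ∫ ω, ℓ (X ω) ∂P ≤ rhoLam P lam ℓ X := by
  have hbdd : ∀ᵐ ω ∂P, ‖ℓ (X ω)‖ ≤ max |a| |b| := by
    filter_upwards [hX] with ω hω using abs_le_max_abs_abs hω.1 hω.2
  refine le_csSup ⟨max |a| |b|, ?_⟩ ⟨P, inferInstance, .rfl,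
    ae_rnDeriv_self_le_ofReal_one_div hlam0 hlam1, rfl⟩
  rintro r ⟨Q, hQ, hQP, -, rfl⟩
  calc ∫ ω, ℓ (X ω) ∂Q ≤ ‖∫ ω, ℓ (X ω) ∂Q‖ := le_abs_self _
    _ ≤ max |a| |b| * Q.real univ := norm_integral_le_of_norm_le_const (hQP.ae_le hbdd)
    _ = max |a| |b| := by simp

theorem IsLamSolution.ae_eq_const_of_ae_le (hlam0 : 0 < lam) (hlam1 : lam ≤ 1)
    (hℓ : StrictMono ℓ) (hℓc : Continuous ℓ) {φ : Ω → ℝ} (hφ1 : ∫ ω, φ ω ∂P = 1)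
    {K v : ℝ} (hv0 : 0 ≤ v) (hvK : v ≤ K) {X : Ω → ℝ} (hX : IsLamSolution P lam ℓ φ K v X)
    (hvX : ∀ᵐ ω ∂P, v ≤ X ω) : ∀ᵐ ω ∂P, X ω = v := by
  obtain ⟨⟨hXm, hXbd, -⟩, hmin⟩ := hX
  have hℓX : ∀ᵐ ω ∂P, ℓ (X ω) ∈ Icc (ℓ 0) (ℓ K) := by
    filter_upwards [hXbd] with ω hω using ⟨hℓ.monotone hω.1, hℓ.monotone hω.2⟩
  have hint : Integrable (fun ω => ℓ (X ω)) P :=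
    .of_mem_Icc _ _ (hℓc.comp_aestronglyMeasurable hXm.1).aemeasurable hℓX
  have hconst : Feasible P φ K v (fun _ => v) :=
    ⟨memLp_const v, .of_forall fun _ => ⟨hv0, hvK⟩, by rw [integral_mul_const, hφ1, one_mul]⟩
  have hle : ∫ ω, ℓ (X ω) ∂P ≤ ℓ v :=
    (integral_le_rhoLam_s10 hlam0 hlam1 hℓX).trans
      ((hmin _ hconst).trans (rhoLam_const hlam0 hlam1 v).le)
  have hnonneg : 0 ≤ᵐ[P] fun ω => ℓ (X ω) - ℓ v := by
    filter_upwards [hvX] with ω hω using sub_nonneg.2 (hℓ.monotone hω)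
  have hzero : ∫ ω, (ℓ (X ω) - ℓ v) ∂P = 0 := by
    refine le_antisymm ?_ (integral_nonneg_of_ae hnonneg)
    rw [integral_sub hint (integrable_const _), integral_const]
    simpa using hle
  filter_upwards [(integral_eq_zero_iff_of_nonneg_ae hnonneg
    (hint.sub (integrable_const _))).1 hzero] with ω hω
  exact hℓ.injective (sub_eq_zero.1 hω)

end RiskMeasure

theorem pos_of_ae_pos_of_measure_setOf_le_ne_zero {Ω : Type*} [MeasurableSpace Ω]
    {P : Measure Ω} {φ : Ω → ℝ} {q : ℝ} (hφ : ∀ᵐ ω ∂P, 0 < φ ω)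
    (hq : P {ω | φ ω ≤ q} ≠ 0) : 0 < q := by
  by_contra! h
  exact hq (measure_mono_null (fun ω hω => not_lt.2 (le_trans hω h)) (ae_iff.1 hφ))

theorem integral_mul_le_mul_setIntegral {Ω : Type*} [MeasurableSpace Ω] {P : Measure Ω}
    {φ X : Ω → ℝ} {K q : ℝ} (hφ : Integrable φ P) (hφ0 : ∀ᵐ ω ∂P, 0 ≤ φ ω)
    (hX : MemLp X ⊤ P) (hXK : ∀ᵐ ω ∂P, X ω ≤ K) (hX0 : ∀ᵐ ω ∂P, φ ω < q → X ω ≤ 0) :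
    ∫ ω, φ ω * X ω ∂P ≤ K * ∫ ω in {ω | q ≤ φ ω}, φ ω ∂P := by
  have hs : NullMeasurableSet {ω | q ≤ φ ω} P :=
    nullMeasurableSet_le aemeasurable_const hφ.aemeasurable
  rw [← integral_const_mul, ← integral_indicator₀ hs]
  refine integral_mono_ae (hφ.mul_of_top_left hX) ((hφ.const_mul K).indicator₀ hs) ?_
  filter_upwards [hφ0, hXK, hX0] with ω hφω hXKω hX0ω
  by_cases hq : ω ∈ {ω | q ≤ φ ω}
  · rw [indicator_of_mem hq, mul_comm K]
    exact mul_le_mul_of_nonneg_left hXKω hφω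
  · rw [indicator_of_notMem hq]
    exact mul_nonpos_of_nonneg_of_nonpos hφω (hX0ω (not_le.1 hq))

theorem rhoLam_beta_bounds_general
    {Ω : Type*} [MeasurableSpace Ω] (P : Measure Ω) [IsProbabilityMeasure P]
    (φ : Ω → ℝ) (hφint : Integrable φ P)
    (hφpos : ∀ᵐ ω ∂P, 0 < φ ω) (hφ1 : ∫ ω, φ ω ∂P = 1)
    (hφunb : ∀ M : ℝ, 0 < P {ω | M < φ ω})
    (K : ℝ) (lam : ℝ) (hlam : lam ∈ Ioo (0:ℝ) 1)
    (ℓ : ℝ → ℝ) (hℓconv : StrictConvexOn ℝ univ ℓ) (hℓmono : StrictMono ℓ)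
    (hℓC1 : ContDiff ℝ 1 ℓ) (hℓ'pos : ∀ x : ℝ, 0 < deriv ℓ x)
    (I : ℝ → EReal) (hI : IsExtendedInverse ℓ I)
    (q : ℝ) (hq : (P {ω | φ ω < q}).toReal ≤ 1 - lam ∧
      1 - lam ≤ (P {ω | φ ω ≤ q}).toReal) :
    ∀ v ∈ Ioo (0:ℝ) K, ∀ X : Ω → ℝ, ∀ β y c : ℝ,
      IsLamSolution P lam ℓ φ K v X → LamForm P φ ℓ I K q X β y c →
        β < v ∧ (K * ∫ ω in {ω | q ≤ φ ω}, φ ω ∂P < v → 0 < β) := by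
  intro v hv X β y c hsol hform
  have hmono : StrictMono (deriv ℓ) := fun a b hab => hℓconv.strictMonoOn_deriv
    (fun x _ => hℓC1.differentiable one_ne_zero x) (mem_univ a) (mem_univ b) hab
  have hcont : Continuous (deriv ℓ) := hℓC1.continuous_deriv le_rfl
  have hq0 : 0 < q := pos_of_ae_pos_of_measure_setOf_le_ne_zero hφpos fun h => by
    have := hq.2
    rw [h, ENNReal.toReal_zero] at this
    linarith [hlam.2]
  have hy : 0 < y := hq0.trans_le hform.2.1
  refine ⟨lt_of_not_ge fun hvβ => ?_, fun hKv => lt_of_not_ge fun hβ0 => ?_⟩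
  · have hvX := hform.ae_le_and_lt_of_le hI hcont hmono hy (hℓ'pos β) hvβ hv.2
    have hXv := hsol.ae_eq_const_of_ae_le hlam.1 hlam.2.le hℓmono hℓC1.continuous hφ1
      hv.1.le hv.2.le (hvX.mono fun _ h => h.1)
    have hφy : ∀ᵐ ω ∂P, ¬ y < φ ω := by
      filter_upwards [hvX, hXv] with ω hω hXω hyφ
      exact (hω.2 hyφ).ne' hXω
    exact (hφunb y).ne' (by simpa using ae_iff.1 hφy)
  · have hX0 : ∀ᵐ ω ∂P, φ ω < q → X ω ≤ 0 := by
      filter_upwards [hform.ae_le_of_le hI hcont hmono hy (hℓ'pos β)] with ω hω hφq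
      exact (hω (hφq.le.trans hform.2.1)).trans hβ0
    have := integral_mul_le_mul_setIntegral hφint (hφpos.mono fun _ h => h.le) hsol.1.1
      (hsol.1.2.1.mono fun _ h => h.2) hX0
    linarith [hsol.1.2.2]

/-- Lemma 3.4: the constant `β = β(v)` in the representation of the
unique solution of the Neyman–Pearson problem for `ρ_λ` at level `v` satisfies `β(v) < v`
for all `v ∈ (0,K)`, and `β(v) > 0` whenever `v > K·E[φ; φ ≥ q]`. -/
theorem rhoLam_beta_bounds
    {Ω : Type*} [MeasurableSpace Ω] (P : Measure Ω) [IsProbabilityMeasure P]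
    (hP : Atomless P)
    (φ : Ω → ℝ) (hφm : Measurable φ) (hφint : Integrable φ P)
    (hφpos : ∀ᵐ ω ∂P, 0 < φ ω) (hφ1 : ∫ ω, φ ω ∂P = 1)
    (hφunb : ∀ M : ℝ, 0 < P {ω | M < φ ω})
    (hFcont : ContinuousOn (fun x : ℝ => (P {ω | φ ω ≤ x}).toReal) (Ioi 0))
    (hFmono : StrictMonoOn (fun x : ℝ => (P {ω | φ ω ≤ x}).toReal) (Ioi 0))
    (K : ℝ) (hK : 0 < K) (lam : ℝ) (hlam : lam ∈ Ioo (0:ℝ) 1)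
    (ℓ : ℝ → ℝ) (hℓconv : StrictConvexOn ℝ univ ℓ) (hℓmono : StrictMono ℓ)
    (hℓC1 : ContDiff ℝ 1 ℓ) (hℓ'pos : ∀ x : ℝ, 0 < deriv ℓ x)
    (I : ℝ → EReal) (hI : IsExtendedInverse ℓ I)
    (q : ℝ) (hq : (P {ω | φ ω < q}).toReal ≤ 1 - lam ∧
      1 - lam ≤ (P {ω | φ ω ≤ q}).toReal) :
    ∀ v ∈ Ioo (0:ℝ) K, ∀ X : Ω → ℝ, ∀ β y c : ℝ,
      IsLamSolution P lam ℓ φ K v X → LamForm P φ ℓ I K q X β y c →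
        β < v ∧ (K * ∫ ω in {ω | q ≤ φ ω}, φ ω ∂P < v → 0 < β) :=
  rhoLam_beta_bounds_general P φ hφint hφpos hφ1 hφunb K lam hlam ℓ hℓconv hℓmono hℓC1 hℓ'pos I hI q
    hq
end
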